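/- arXiv:1306.3146 — 14 statements merged into one kernel-verified Lean document; each statement's English description precedes it below -/
import Mathlib

section
/- Let m ≥ 2, let λ ∈ ℤ^m satisfy λ₁ ≥ λ₂ ≥ ⋯ ≥ λ_m, and let w be a permutation of {1,…,m}. Then the vector λ − w(λ) = (λ_i − λ_{w(i)})_{i=1}^m is a sum of positive roots of type A_{m−1}, and the minimal number n(λ,w) of positive roots (with repetitions) summing to it equals Σ_{i : λ_i > λ_{w(i)}} (λ_i − λ_{w(i)}), i.e. the sum of the positive entries of λ − w(λ). -/
/-!
The invariant is the positive mass `posPartSum v = ∑ i, (v i)⁺`. It is subadditive and equals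
`1` on every positive root, so a sum of `N` positive roots has positive mass at most `N`.
Conversely, a vector with total sum `0` and nonnegative prefix sums is a sum of exactly `posPartSum v`
positive roots: take the first negative coordinate `j`; a positive coordinate `i < j` must exist,
and subtracting `ε_i - ε_j` keeps both conditions while lowering the positive mass by one.
Dominance of `λ` makes the prefix sums of `λ - w(λ)` nonnegative, since among all index sets of
a given size, an initial segment carries the largest `λ`-sum.
-/

/-- The positive roots of type `A_{m-1}`, realized in `ℤ^m` as the vectors
`ε_i - ε_j` for `i < j`. -/
def typeAPositiveRoots (m : ℕ) : Set (Fin m → ℤ) :=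
  {v | ∃ i j : Fin m, i < j ∧ v = Pi.single i 1 - Pi.single j 1}

open Finset

theorem Antitone.sum_le_sum_Iic {ι M : Type*} [LinearOrder ι] [LocallyFiniteOrderBot ι]
    [AddCommMonoid M] [PartialOrder M] [IsOrderedCancelAddMonoid M] {f : ι → M}
    (hf : Antitone f) (j : ι) {T : Finset ι} (hT : #T = #(Iic j)) :
    ∑ t ∈ T, f t ≤ ∑ t ∈ Iic j, f t := by
  classical
  rw [← sum_sdiff_le_sum_sdiff]
  calc ∑ t ∈ T \ Iic j, f t
      ≤ #(T \ Iic j) • f j :=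
        sum_le_card_nsmul _ _ _ fun t ht ↦ hf (not_le.mp (mem_Iic.not.mp (mem_sdiff.mp ht).2)).le
    _ = #(Iic j \ T) • f j := by rw [card_sdiff_comm hT]
    _ ≤ ∑ t ∈ Iic j \ T, f t :=
        card_nsmul_le_sum _ _ _ fun t ht ↦ hf (mem_Iic.mp (mem_sdiff.mp ht).1)

theorem sum_Iic_sub_perm_nonneg {m : ℕ} {lam : Fin m → ℤ} (hlam : Antitone lam)
    (w : Equiv.Perm (Fin m)) (j : Fin m) :
    0 ≤ ∑ i ∈ Iic j, (lam i - lam (w i)) := by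
  rw [sum_sub_distrib, ← sum_image fun a _ b _ h ↦ w.injective h, sub_nonneg]
  exact hlam.sum_le_sum_Iic j (card_image_of_injective _ w.injective)

theorem single_sub_single_apply {ι : Type*} [DecidableEq ι] {i j : ι} (hij : i ≠ j) (t : ι) :
    (Pi.single i 1 - Pi.single j 1 : ι → ℤ) t =
      if t = i then 1 else if t = j then -1 else 0 := by
  simp only [Pi.sub_apply, Pi.single_apply]
  split_ifs <;> subst_vars <;> simp_all

section PosPartSum

variable {ι : Type*} [Fintype ι]

def posPartSum (v : ι → ℤ) : ℕ :=
  ∑ i, (v i).toNat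

theorem posPartSum_add_le (v v' : ι → ℤ) :
    posPartSum (v + v') ≤ posPartSum v + posPartSum v' := by
  unfold posPartSum
  rw [← sum_add_distrib]
  exact sum_le_sum fun i _ ↦ by simp only [Pi.add_apply]; omega

theorem eq_zero_of_posPartSum_eq_zero {v : ι → ℤ} (hsum : ∑ i, v i = 0)
    (hv : posPartSum v = 0) : v = 0 := by
  have hle : ∀ i ∈ univ, v i ≤ 0 := fun i hi ↦ by
    have := (sum_eq_zero_iff.mp hv) i hi; omega
  funext i
  exact (sum_eq_zero_iff_of_nonpos hle).mp hsum i (mem_univ i)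

variable [DecidableEq ι]

theorem sum_single_sub_single (i j : ι) :
    ∑ t, (Pi.single i 1 - Pi.single j 1 : ι → ℤ) t = 0 := by
  simp only [Pi.sub_apply, sum_sub_distrib, sum_pi_single', mem_univ, if_true, sub_self]

theorem posPartSum_sub_single_sub_single {v : ι → ℤ} {i j : ι} (hi : 0 < v i) (hj : v j < 0) :
    posPartSum (v - (Pi.single i 1 - Pi.single j 1)) + 1 = posPartSum v := by
  have hij : i ≠ j := by rintro rfl; omega
  have hcoord : ∀ t, ((v - (Pi.single i 1 - Pi.single j 1) : ι → ℤ) t).toNat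
      + (if t = i then 1 else 0) = (v t).toNat := by
    intro t
    rw [Pi.sub_apply, single_sub_single_apply hij]
    split_ifs <;> subst_vars <;> omega
  unfold posPartSum
  rw [← sum_congr rfl fun t _ ↦ hcoord t, sum_add_distrib, sum_ite_eq' univ i fun _ ↦ 1,
    if_pos (mem_univ i)]

end PosPartSum

theorem sum_Iic_single_sub_single {m : ℕ} (i j k : Fin m) :
    ∑ t ∈ Iic k, (Pi.single i 1 - Pi.single j 1 : Fin m → ℤ) t =
      (if i ≤ k then 1 else 0) - (if j ≤ k then 1 else 0) := by
  simp only [Pi.sub_apply, sum_sub_distrib, sum_pi_single', mem_Iic]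

theorem posPartSum_of_mem_typeAPositiveRoots {m : ℕ} {v : Fin m → ℤ}
    (hv : v ∈ typeAPositiveRoots m) : posPartSum v = 1 := by
  obtain ⟨i, j, hij, rfl⟩ := hv
  have h := posPartSum_sub_single_sub_single (v := Pi.single i 1 - Pi.single j 1)
    (i := i) (j := j) (by simp [hij.ne]) (by simp [hij.ne'])
  rw [sub_self, show posPartSum (0 : Fin m → ℤ) = 0 by simp [posPartSum]] at h
  omega

theorem posPartSum_sum_le_length {m : ℕ} {l : List (Fin m → ℤ)}
    (hl : ∀ v ∈ l, v ∈ typeAPositiveRoots m) : posPartSum l.sum ≤ l.length := by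
  induction l with
  | nil => simp [posPartSum]
  | cons v l ih =>
    rw [List.sum_cons, List.length_cons]
    calc posPartSum (v + l.sum)
        ≤ posPartSum v + posPartSum l.sum := posPartSum_add_le _ _
      _ ≤ 1 + l.length := by
        rw [posPartSum_of_mem_typeAPositiveRoots (hl v List.mem_cons_self)]
        exact Nat.add_le_add_left (ih fun x hx ↦ hl x (List.mem_cons_of_mem v hx)) 1
      _ = l.length + 1 := Nat.add_comm _ _

section PrefixNonneg

variable {m : ℕ} {v : Fin m → ℤ}

theorem exists_pos_lt_first_neg (hsum : ∑ i, v i = 0) (hpre : ∀ k, 0 ≤ ∑ t ∈ Iic k, v t)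
    (hv : v ≠ 0) :
    ∃ i j, i < j ∧ 0 < v i ∧ v j < 0 ∧ ∀ t < j, 0 ≤ v t := by
  have hneg : (univ.filter fun t ↦ v t < 0).Nonempty := by
    by_contra! h
    have hnonneg : ∀ t ∈ univ, 0 ≤ v t := fun t _ ↦ by
      simpa using filter_eq_empty_iff.mp h (mem_univ t)
    exact hv (funext fun t ↦ (sum_eq_zero_iff_of_nonneg hnonneg).mp hsum t (mem_univ t))
  obtain ⟨j, hj, hjmin⟩ := exists_min_image _ id hneg
  have hj : v j < 0 := (mem_filter.mp hj).2
  have hbefore : ∀ t < j, 0 ≤ v t := fun t htj ↦ by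
    by_contra! ht
    exact absurd (hjmin t (mem_filter.mpr ⟨mem_univ t, ht⟩)) (not_le.mpr htj)
  have hIio : 0 < ∑ t ∈ Iio j, v t := by
    have := hpre j
    rw [← Iio_insert, sum_insert (by simp)] at this
    omega
  obtain ⟨i, hi, hvi⟩ := exists_lt_of_sum_lt (f := fun _ ↦ (0 : ℤ)) (by simpa using hIio)
  exact ⟨i, j, mem_Iio.mp hi, hvi, hj, hbefore⟩

theorem prefix_sum_nonneg_sub_single_sub_single (hpre : ∀ k, 0 ≤ ∑ t ∈ Iic k, v t)
    {i j : Fin m} (hij : i < j) (hi : 0 < v i) (hbefore : ∀ t < j, 0 ≤ v t) (k : Fin m) :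
    0 ≤ ∑ t ∈ Iic k, (v - (Pi.single i 1 - Pi.single j 1) : Fin m → ℤ) t := by
  rw [sum_congr rfl fun t _ ↦ Pi.sub_apply _ _ t, sum_sub_distrib, sum_Iic_single_sub_single]
  have := hpre k
  by_cases hjk : j ≤ k
  · simp only [if_pos (hij.le.trans hjk), if_pos hjk]; omega
  by_cases hik : i ≤ k
  · have hvk : v i ≤ ∑ t ∈ Iic k, v t :=
      single_le_sum (fun t ht ↦ hbefore t ((mem_Iic.mp ht).trans_lt (not_le.mp hjk)))
        (mem_Iic.mpr hik)
    simp only [if_pos hik, if_neg hjk]; omega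
  · simp only [if_neg hik, if_neg hjk]; omega

theorem exists_list_typeAPositiveRoots_sum_eq (hsum : ∑ i, v i = 0)
    (hpre : ∀ k, 0 ≤ ∑ t ∈ Iic k, v t) :
    ∃ l : List (Fin m → ℤ), (∀ x ∈ l, x ∈ typeAPositiveRoots m) ∧ l.sum = v ∧
      l.length = posPartSum v := by
  induction hN : posPartSum v generalizing v with
  | zero => exact ⟨[], by simp, (eq_zero_of_posPartSum_eq_zero hsum hN).symm, rfl⟩
  | succ N ih =>
    have hv : v ≠ 0 := by rintro rfl; simp [posPartSum] at hN
    obtain ⟨i, j, hij, hi, hj, hbefore⟩ := exists_pos_lt_first_neg hsum hpre hv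
    obtain ⟨l, hroots, hl, hlen⟩ := ih (v := v - (Pi.single i 1 - Pi.single j 1))
      (by rw [sum_congr rfl fun t _ ↦ Pi.sub_apply _ _ t, sum_sub_distrib, hsum,
        sum_single_sub_single, sub_zero])
      (prefix_sum_nonneg_sub_single_sub_single hpre hij hi hbefore)
      (by have := posPartSum_sub_single_sub_single hi hj; omega)
    refine ⟨(Pi.single i 1 - Pi.single j 1) :: l, ?_, by rw [List.sum_cons, hl, add_sub_cancel],
      by rw [List.length_cons, hlen]⟩
    rintro x (_ | ⟨_, hx⟩)
    exacts [⟨i, j, hij, rfl⟩, hroots x hx]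

end PrefixNonneg

theorem extremal_kostant_degree_typeA_general (m : ℕ)
    (lam : Fin m → ℤ) (hdom : ∀ i j : Fin m, i ≤ j → lam j ≤ lam i)
    (w : Equiv.Perm (Fin m)) :
    IsLeast {N : ℕ | ∃ l : List (Fin m → ℤ),
        (∀ v ∈ l, v ∈ typeAPositiveRoots m) ∧
        l.sum = (fun i => lam i - lam (w i)) ∧
        l.length = N}
      (∑ i : Fin m, (lam i - lam (w i)).toNat) := by
  have hsum : ∑ i, (lam i - lam (w i)) = 0 := by
    rw [sum_sub_distrib, Equiv.sum_comp w lam, sub_self]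
  refine ⟨exists_list_typeAPositiveRoots_sum_eq hsum (sum_Iic_sub_perm_nonneg hdom w), ?_⟩
  rintro N ⟨l, hroots, hl, rfl⟩
  have := posPartSum_sum_le_length hroots
  rwa [hl] at this

/-- For a dominant (nonincreasing) `λ ∈ ℤ^m` and a permutation `w` of `{1,…,m}`,
the vector `λ - w(λ)` is a sum of positive roots of type `A_{m-1}`, and the minimal
number of positive roots (with repetitions) summing to it equals the sum of the
positive entries of `λ - w(λ)`. -/
theorem extremal_kostant_degree_typeA (m : ℕ) (hm : 2 ≤ m)
    (lam : Fin m → ℤ) (hdom : ∀ i j : Fin m, i ≤ j → lam j ≤ lam i)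
    (w : Equiv.Perm (Fin m)) :
    IsLeast {N : ℕ | ∃ l : List (Fin m → ℤ),
        (∀ v ∈ l, v ∈ typeAPositiveRoots m) ∧
        l.sum = (fun i => lam i - lam (w i)) ∧
        l.length = N}
      (∑ i : Fin m, (lam i - lam (w i)).toNat) :=
  extremal_kostant_degree_typeA_general m lam hdom w
end

section
/- Total additivity of the extremal Kostant degree in type A: let m ≥ 2, let λ, μ ∈ ℤ^m both be dominant (nonincreasing), and let w be any permutation of {1,…,m}. Then n(λ + μ, w) = n(λ, w) + n(μ, w). -/
/-- The set of lengths of decompositions of `v` into a sum of positive roots of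
type `A_{m-1}` (with repetitions). -/
def typeADecompLengths (m : ℕ) (v : Fin m → ℤ) : Set ℕ :=
  {N | ∃ l : List (Fin m → ℤ),
    (∀ u ∈ l, u ∈ typeAPositiveRoots m) ∧ l.sum = v ∧ l.length = N}

/-!
For `v` in the positive cone (coordinate sum zero, nonnegative prefix sums) the least number of
positive roots summing to `v` is `∑ₜ max (v t) 0`. A root `ε_i - ε_j` raises this quantity by at
most one, and subtracting `ε_i - ε_j`, with `j` the first negative coordinate of `v` and `i < j` a
positive one, stays in the cone and lowers it by exactly one.

For dominant `λ`, `λ - w(λ)` lies in the cone because an initial segment carries the largest sum of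
`λ` among index sets of its size. Moreover `λ_i - λ_{w i}` and `μ_i - μ_{w i}` have the same sign,
both being decided by the comparison of `i` with `w i`, so the positive parts of `λ - w(λ)` and
`μ - w(μ)` add up to those of `λ + μ - w(λ + μ)`.
-/

open Finset

namespace Finset

theorem sum_le_sum_of_card_eq {ι M : Type*} [DecidableEq ι] [AddCommMonoid M] [PartialOrder M]
    [IsOrderedAddMonoid M] {s t : Finset ι} {f : ι → M} (c : M) (hst : #s = #t)
    (hs : ∀ x ∈ s \ t, c ≤ f x) (ht : ∀ x ∈ t \ s, f x ≤ c) :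
    ∑ x ∈ t, f x ≤ ∑ x ∈ s, f x := by
  calc ∑ x ∈ t, f x
      = ∑ x ∈ t ∩ s, f x + ∑ x ∈ t \ s, f x := (sum_inter_add_sum_sdiff t s f).symm
    _ ≤ ∑ x ∈ t ∩ s, f x + #(t \ s) • c := by grw [sum_le_card_nsmul _ _ _ ht]
    _ = ∑ x ∈ s ∩ t, f x + #(s \ t) • c := by rw [inter_comm, card_sdiff_comm hst]
    _ ≤ ∑ x ∈ s ∩ t, f x + ∑ x ∈ s \ t, f x := by grw [card_nsmul_le_sum _ _ _ hs]
    _ = ∑ x ∈ s, f x := sum_inter_add_sum_sdiff s t f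

end Finset

theorem Antitone.sum_Iic_comp_perm_le {α M : Type*} [LinearOrder α] [LocallyFiniteOrderBot α]
    [AddCommMonoid M] [PartialOrder M] [IsOrderedAddMonoid M] {f : α → M} (hf : Antitone f)
    (w : Equiv.Perm α) (k : α) :
    ∑ i ∈ Iic k, f (w i) ≤ ∑ i ∈ Iic k, f i := by
  refine (sum_map (Iic k) w.toEmbedding f).symm.trans_le <|
    sum_le_sum_of_card_eq (f k) (card_map _).symm (fun x hx => hf ?_) (fun x hx => hf ?_)
  · exact mem_Iic.mp (mem_sdiff.mp hx).1
  · exact (not_le.mp fun h => (mem_sdiff.mp hx).2 (mem_Iic.mpr h)).le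

/-- The `ℕ`-span of the positive roots of type `A_{m-1}`, described by its prefix sums. -/
def typeAPositiveCone (m : ℕ) : Set (Fin m → ℤ) :=
  {v | ∑ t, v t = 0 ∧ ∀ k, 0 ≤ ∑ t ∈ Iic k, v t}

theorem sub_comp_perm_mem_typeAPositiveCone {m : ℕ} {lam : Fin m → ℤ} (hlam : Antitone lam)
    (w : Equiv.Perm (Fin m)) : (fun i => lam i - lam (w i)) ∈ typeAPositiveCone m := by
  refine ⟨by rw [sum_sub_distrib, Equiv.sum_comp w lam, sub_self], fun k => ?_⟩
  rw [sum_sub_distrib, sub_nonneg]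
  exact hlam.sum_Iic_comp_perm_le w k

section Roots

variable {m : ℕ} {v : Fin m → ℤ} {i j : Fin m}

def typeARoot (i j : Fin m) : Fin m → ℤ := Pi.single i 1 - Pi.single j 1

theorem typeARoot_apply (t : Fin m) :
    typeARoot i j t = (if t = i then 1 else 0) - if t = j then 1 else 0 := by
  simp [typeARoot, Pi.single_apply]

theorem sum_typeARoot (s : Finset (Fin m)) :
    ∑ t ∈ s, typeARoot i j t = (if i ∈ s then 1 else 0) - if j ∈ s then 1 else 0 := by
  simp only [typeARoot, Pi.sub_apply, sum_sub_distrib, sum_pi_single']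

theorem sum_toNat_typeARoot (hij : i ≠ j) : ∑ t, (typeARoot i j t).toNat = 1 := by
  rw [sum_eq_single_of_mem i (mem_univ i) fun t _ hti => by
    by_cases htj : t = j <;> simp [typeARoot_apply, hti, htj, hij.symm]]
  simp [typeARoot_apply, hij]

theorem sum_toNat_le_of_mem_typeADecompLengths {N : ℕ} (hN : N ∈ typeADecompLengths m v) :
    ∑ t, (v t).toNat ≤ N := by
  obtain ⟨l, hl, rfl, rfl⟩ := hN
  induction l with
  | nil => simp
  | cons u l ih =>
    obtain ⟨i, j, hij, rfl⟩ := hl _ List.mem_cons_self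
    have hl' : ∑ t, (l.sum t).toNat ≤ l.length := ih fun u hu => hl u (List.mem_cons_of_mem _ hu)
    calc ∑ t, ((typeARoot i j + l.sum) t).toNat
        ≤ ∑ t, ((typeARoot i j t).toNat + (l.sum t).toNat) :=
          sum_le_sum fun t _ => by simp only [Pi.add_apply]; omega
      _ ≤ l.length + 1 := by rw [sum_add_distrib, sum_toNat_typeARoot hij.ne]; omega
    
theorem sum_toNat_eq_sum_toNat_sub_typeARoot_add_one (hi : 0 < v i) (hj : v j < 0) :
    ∑ t, (v t).toNat = ∑ t, ((v - typeARoot i j) t).toNat + 1 := by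
  have hij : i ≠ j := by rintro rfl; omega
  have hpoint (t : Fin m) :
      (v t).toNat = ((v - typeARoot i j) t).toNat + if t = i then 1 else 0 := by
    by_cases hti : t = i
    · subst hti; simp [typeARoot_apply, hij]; omega
    · by_cases htj : t = j
      · subst htj; simp [typeARoot_apply, hti]; omega
      · simp [typeARoot_apply, hti, htj]
  simp [sum_congr rfl fun t _ => hpoint t, sum_add_distrib]

theorem sub_typeARoot_mem_typeAPositiveCone (hv : v ∈ typeAPositiveCone m) (hij : i < j)
    (hi : 0 < v i) (hbefore : ∀ t < j, 0 ≤ v t) :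
    v - typeARoot i j ∈ typeAPositiveCone m := by
  have hsum (s : Finset (Fin m)) : ∑ t ∈ s, (v - typeARoot i j) t
      = ∑ t ∈ s, v t - ((if i ∈ s then 1 else 0) - if j ∈ s then 1 else 0) := by
    rw [← sum_typeARoot]; exact sum_sub_distrib ..
  refine ⟨by rw [hsum]; simp [hv.1], fun k => ?_⟩
  rw [hsum]
  by_cases hjk : j ≤ k
  · simpa [hij.le.trans hjk, hjk] using hv.2 k
  by_cases hik : i ≤ k
  · have hvi : v i ≤ ∑ t ∈ Iic k, v t :=
      single_le_sum (fun t ht => hbefore t ((mem_Iic.mp ht).trans_lt (not_le.mp hjk)))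
        (mem_Iic.mpr hik)
    simp only [mem_Iic, hik, hjk]
    omega
  · simpa [hik, hjk] using hv.2 k

end Roots

section Decomposition

variable {m : ℕ} {v : Fin m → ℤ}

theorem exists_sub_typeARoot_mem_typeAPositiveCone (hv : v ∈ typeAPositiveCone m) (hv0 : v ≠ 0) :
    ∃ i j, i < j ∧ 0 < v i ∧ v j < 0 ∧ v - typeARoot i j ∈ typeAPositiveCone m := by
  have hneg : (univ.filter fun t => v t < 0).Nonempty := by
    by_contra! h
    refine hv0 (funext fun t => (sum_eq_zero_iff_of_nonneg fun t _ => ?_).mp hv.1 t (mem_univ t))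
    simpa using filter_eq_empty_iff.mp h (mem_univ t)
  obtain ⟨j, hj, hjmin⟩ := (univ.filter fun t => v t < 0).exists_min_image id hneg
  have hj : v j < 0 := (mem_filter.mp hj).2
  have hbefore : ∀ t < j, 0 ≤ v t := fun t htj => by
    by_contra! ht
    exact (hjmin t (mem_filter.mpr ⟨mem_univ t, ht⟩)).not_gt htj
  have hprefix : ∑ t ∈ Iio j, (0 : ℤ) < ∑ t ∈ Iio j, v t := by
    have := hv.2 j
    rw [Iic_eq_cons_Iio, sum_cons] at this
    simp only [sum_const_zero]
    omega
  obtain ⟨i, hij, hi⟩ := exists_lt_of_sum_lt hprefix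
  have hij : i < j := mem_Iio.mp hij
  exact ⟨i, j, hij, hi, hj, sub_typeARoot_mem_typeAPositiveCone hv hij hi hbefore⟩

theorem sum_toNat_mem_typeADecompLengths (hv : v ∈ typeAPositiveCone m) :
    ∑ t, (v t).toNat ∈ typeADecompLengths m v := by
  induction hN : ∑ t, (v t).toNat using Nat.strong_induction_on generalizing v with
  | _ N ih =>
  by_cases hv0 : v = 0
  · subst hv0
    obtain rfl : N = 0 := by simp [← hN]
    exact ⟨[], by simp, by simp, rfl⟩
  obtain ⟨i, j, hij, hi, hj, hv'⟩ := exists_sub_typeARoot_mem_typeAPositiveCone hv hv0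
  have hcount := sum_toNat_eq_sum_toNat_sub_typeARoot_add_one hi hj
  obtain ⟨l, hl, hsum, hlen⟩ := ih _ (by omega) hv' rfl
  refine ⟨typeARoot i j :: l, ?_, by simp [hsum], by simp [hlen, ← hN, hcount]⟩
  rintro u (_ | ⟨_, hu⟩)
  · exact ⟨i, j, hij, rfl⟩
  · exact hl u hu

theorem isLeast_typeADecompLengths (hv : v ∈ typeAPositiveCone m) :
    IsLeast (typeADecompLengths m v) (∑ t, (v t).toNat) :=
  ⟨sum_toNat_mem_typeADecompLengths hv, fun _ => sum_toNat_le_of_mem_typeADecompLengths⟩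

end Decomposition

theorem sum_toNat_sub_comp_perm_add {m : ℕ} {lam mu : Fin m → ℤ} (hlam : Antitone lam)
    (hmu : Antitone mu) (w : Equiv.Perm (Fin m)) :
    ∑ i, ((lam i + mu i) - (lam (w i) + mu (w i))).toNat
      = ∑ i, (lam i - lam (w i)).toNat + ∑ i, (mu i - mu (w i)).toNat := by
  rw [← sum_add_distrib]
  refine sum_congr rfl fun i _ => ?_
  rcases le_total i (w i) with h | h
  · have := hlam h; have := hmu h; omega
  · have := hlam h; have := hmu h; omega

theorem extremal_kostant_additivity_typeA_general (m : ℕ)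
    (lam mu : Fin m → ℤ)
    (hlam : ∀ i j : Fin m, i ≤ j → lam j ≤ lam i)
    (hmu : ∀ i j : Fin m, i ≤ j → mu j ≤ mu i)
    (w : Equiv.Perm (Fin m)) :
    ∃ a b : ℕ,
      IsLeast (typeADecompLengths m (fun i => lam i - lam (w i))) a ∧
      IsLeast (typeADecompLengths m (fun i => mu i - mu (w i))) b ∧
      IsLeast (typeADecompLengths m
        (fun i => (lam i + mu i) - (lam (w i) + mu (w i)))) (a + b) := by
  have hlm : Antitone (lam + mu) := Antitone.add hlam hmu
  refine ⟨_, _, isLeast_typeADecompLengths (sub_comp_perm_mem_typeAPositiveCone hlam w),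
    isLeast_typeADecompLengths (sub_comp_perm_mem_typeAPositiveCone hmu w), ?_⟩
  rw [← sum_toNat_sub_comp_perm_add hlam hmu w]
  exact isLeast_typeADecompLengths (sub_comp_perm_mem_typeAPositiveCone hlm w)

/-- Total additivity of the extremal Kostant degree in type `A`: for dominant
(nonincreasing) `λ, μ ∈ ℤ^m` and any permutation `w`, one has
`n(λ + μ, w) = n(λ, w) + n(μ, w)`. -/
theorem extremal_kostant_additivity_typeA (m : ℕ) (hm : 2 ≤ m)
    (lam mu : Fin m → ℤ)
    (hlam : ∀ i j : Fin m, i ≤ j → lam j ≤ lam i)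
    (hmu : ∀ i j : Fin m, i ≤ j → mu j ≤ mu i)
    (w : Equiv.Perm (Fin m)) :
    ∃ a b : ℕ,
      IsLeast (typeADecompLengths m (fun i => lam i - lam (w i))) a ∧
      IsLeast (typeADecompLengths m (fun i => mu i - mu (w i))) b ∧
      IsLeast (typeADecompLengths m
        (fun i => (lam i + mu i) - (lam (w i) + mu (w i)))) (a + b) :=
  extremal_kostant_additivity_typeA_general m lam mu hlam hmu w
end

section
/- Explicit extremal Kostant degree in type C: let n ≥ 1, let λ ∈ ℤ^n be a dominant weight of C_n, and let w be a signed permutation of {1,…,n}. Then λ − w(λ) is a sum of positive roots of C_n, and n(λ,w) = Σ_{i : w(i) > i} (λ_i − λ_{w(i)}) + Σ_{i : w(i) < 0} λ_i. In particular n(λ + μ, w) = n(λ,w) + n(μ,w) for all dominant λ, μ. -/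
/-- The positive roots of type `C_n`, realized in `ℤ^n`: the vectors `ε_i - ε_j`
and `ε_i + ε_j` for `i < j`, and `2ε_i`. -/
def typeCPositiveRoots (n : ℕ) : Set (Fin n → ℤ) :=
  {v | (∃ i : Fin n, v = Pi.single i 2) ∨
    ∃ i j : Fin n, i < j ∧
      (v = Pi.single i 1 - Pi.single j 1 ∨ v = Pi.single i 1 + Pi.single j 1)}

/-- The set of lengths of decompositions of `v` into a sum of positive roots of
type `C_n` (with repetitions). -/
def typeCDecompLengths (n : ℕ) (v : Fin n → ℤ) : Set ℕ :=
  {N | ∃ l : List (Fin n → ℤ),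
    (∀ u ∈ l, u ∈ typeCPositiveRoots n) ∧ l.sum = v ∧ l.length = N}

/-!
Every positive root of `C_n` has `ℓ¹`-norm `2`, so `n(v) ≥ ‖v‖₁ / 2`. Conversely, a vector `v`
with nonnegative prefix sums and even coordinate sum is a sum of exactly `‖v‖₁ / 2` positive
roots: greedily subtract `ε_i - ε_j` (where `j` is the first negative coordinate and `i < j` a
positive one) or, if `v ≥ 0`, `2ε_i` or `ε_i + ε_j`; no cancellation occurs, so each step lowers
`‖v‖₁` by `2`. For `v = λ - w(λ)` with `λ` dominant the prefix sums are nonnegative because the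
first `k` coordinates of an antitone `λ` dominate any `k` of its coordinates, and reindexing by
`σ` computes `‖v‖₁` as twice the stated formula. That formula is additive in `λ`.
-/

open Finset

theorem sum_le_sum_Iic_of_antitone {ι M : Type*} [LinearOrder ι] [LocallyFiniteOrderBot ι]
    [AddCommMonoid M] [PartialOrder M] [IsOrderedAddMonoid M] {f : ι → M} (hf : Antitone f)
    {s : Finset ι} {k : ι} (hs : #s = #(Iic k)) : ∑ i ∈ s, f i ≤ ∑ i ∈ Iic k, f i := by
  rw [← sum_inter_add_sum_sdiff s (Iic k), ← sum_inter_add_sum_sdiff (Iic k) s, inter_comm]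
  refine add_le_add le_rfl ?_
  calc ∑ i ∈ s \ Iic k, f i ≤ #(s \ Iic k) • f k :=
        sum_le_card_nsmul _ _ _ fun i hi => 
          hf (not_le.mp (mem_Iic.not.mp (mem_sdiff.mp hi).2)).le
    _ = #(Iic k \ s) • f k := by rw [card_sdiff_comm hs]
    _ ≤ ∑ i ∈ Iic k \ s, f i :=
        card_nsmul_le_sum _ _ _ fun i hi => hf (mem_Iic.mp (mem_sdiff.mp hi).1)

variable {n : ℕ}

theorem sum_abs_eq_two_of_mem_typeCPositiveRoots {u : Fin n → ℤ}
    (hu : u ∈ typeCPositiveRoots n) : ∑ j, |u j| = 2 := by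
  rcases hu with ⟨i, rfl⟩ | ⟨i, j, hij, rfl | rfl⟩
  · simp [Pi.single_apply, apply_ite]
  all_goals
    rw [Fintype.sum_eq_add i j hij.ne fun x hx => by simp [hx.1, hx.2]]
    simp [hij.ne, hij.ne']

theorem even_sum_of_mem_typeCPositiveRoots {u : Fin n → ℤ}
    (hu : u ∈ typeCPositiveRoots n) : Even (∑ j, u j) := by
  rcases hu with ⟨i, rfl⟩ | ⟨i, j, hij, rfl | rfl⟩ <;> 
    simp [sum_add_distrib, sum_sub_distrib]

theorem sum_abs_list_sum_le_two_mul_length {l : List (Fin n → ℤ)}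
    (hl : ∀ u ∈ l, u ∈ typeCPositiveRoots n) :
    ∑ j, |l.sum j| ≤ 2 * l.length := by
  induction l with
  | nil => simp
  | cons u l ih =>
    simp only [List.forall_mem_cons] at hl
    calc ∑ j, |(u :: l).sum j| ≤ ∑ j, |u j| + ∑ j, |l.sum j| := by
          rw [← sum_add_distrib]
          exact sum_le_sum fun j _ => by simpa using abs_add_le (u j) (l.sum j)
      _ ≤ 2 * (u :: l).length := by
          rw [sum_abs_eq_two_of_mem_typeCPositiveRoots hl.1, List.length_cons]
          push_cast
          linarith [ih hl.2]

theorem sum_abs_le_two_mul_of_mem_typeCDecompLengths {v : Fin n → ℤ} {N : ℕ}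
    (hN : N ∈ typeCDecompLengths n v) : ∑ j, |v j| ≤ 2 * N := by
  obtain ⟨l, hl, rfl, rfl⟩ := hN
  exact sum_abs_list_sum_le_two_mul_length hl

theorem exists_mem_typeCPositiveRoots_le_of_nonneg {v : Fin n → ℤ} (hv : 0 ≤ v) (hv0 : v ≠ 0)
    (heven : Even (∑ j, v j)) : ∃ α ∈ typeCPositiveRoots n, 0 ≤ α ∧ α ≤ v := by
  obtain ⟨i, hi⟩ := Function.ne_iff.mp hv0
  have hvi : 1 ≤ v i := by have := hv i; simp only [Pi.zero_apply] at hi this; omega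
  by_cases h2 : 2 ≤ v i
  · refine ⟨Pi.single i 2, Or.inl ⟨i, rfl⟩, Pi.single_nonneg.mpr (by norm_num), fun x => ?_⟩
    rcases eq_or_ne x i with rfl | hx
    · simpa using h2
    · simpa [hx] using hv x
  obtain ⟨j, hji, hvj⟩ : ∃ j, j ≠ i ∧ 1 ≤ v j := by
    by_contra! h
    have hsum : ∑ j, v j = v i :=
      Fintype.sum_eq_single i fun j hj => le_antisymm (by linarith [h j hj]) (hv j)
    rw [hsum, show v i = 1 by omega] at heven
    exact Int.not_even_one heven
  refine ⟨Pi.single i 1 + Pi.single j 1, ?_, ?_, fun x => ?_⟩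
  · rcases hji.lt_or_gt with h | h
    · exact Or.inr ⟨j, i, h, Or.inr (add_comm _ _)⟩
    · exact Or.inr ⟨i, j, h, Or.inr rfl⟩
  · exact add_nonneg (Pi.single_nonneg.mpr zero_le_one) (Pi.single_nonneg.mpr zero_le_one)
  · have := hv x
    simp only [Pi.add_apply, Pi.single_apply]
    split_ifs <;> simp_all

theorem exists_pos_lt_of_prefix_nonneg {v : Fin n → ℤ} (hpre : ∀ k, 0 ≤ ∑ x ∈ Iic k, v x)
    (hneg : ∃ j, v j < 0) :
    ∃ i j, i < j ∧ 0 < v i ∧ v j < 0 ∧ ∀ k, i ≤ k → k < j → 0 < ∑ x ∈ Iic k, v x := by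
  obtain ⟨j, hj, hjmin⟩ := wellFounded_lt.has_min {j | v j < 0} hneg
  have hbefore : ∀ x < j, 0 ≤ v x := fun x hx => not_lt.mp fun h => hjmin x h hx
  obtain ⟨i, hi, hvi⟩ : ∃ i ∈ Iio j, 0 < v i := by
    refine exists_lt_of_sum_lt ?_
    have := hpre j
    rw [← Iio_insert, sum_insert (by simp)] at this
    simpa using (by linarith [hj.out] : 0 < ∑ x ∈ Iio j, v x)
  refine ⟨i, j, mem_Iio.mp hi, hvi, hj, fun k hik hkj => ?_⟩
  exact hvi.trans_le <| single_le_sum (fun x hx => hbefore x ((mem_Iic.mp hx).trans_lt hkj))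
    (mem_Iic.mpr hik)

theorem exists_typeCPositiveRoots_greedy_step {v : Fin n → ℤ} (hv0 : v ≠ 0)
    (hpre : ∀ k, 0 ≤ ∑ x ∈ Iic k, v x) (heven : Even (∑ j, v j)) :
    ∃ α ∈ typeCPositiveRoots n, (∀ x, |v x - α x| + |α x| = |v x|) ∧
      ∀ k, 0 ≤ ∑ x ∈ Iic k, (v x - α x) := by
  by_cases hneg : ∃ j, v j < 0
  · obtain ⟨i, j, hij, hvi, hvj, hmid⟩ := exists_pos_lt_of_prefix_nonneg hpre hneg
    refine ⟨Pi.single i 1 - Pi.single j 1, Or.inr ⟨i, j, hij, Or.inl rfl⟩, fun x => ?_,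
      fun k => ?_⟩
    · rcases eq_or_ne x i with rfl | hxi
      · simp [hij.ne, abs_of_pos hvi, abs_of_nonneg (by omega : 0 ≤ v x - 1)]
      rcases eq_or_ne x j with rfl | hxj
      · simp [hxi, abs_of_neg hvj, abs_of_nonpos (by omega : v x + 1 ≤ 0)]
      · simp [hxi, hxj]
    · have := hpre k
      simp only [sum_sub_distrib, Pi.sub_apply, sum_pi_single', mem_Iic]
      by_cases hik : i ≤ k
      · by_cases hjk : j ≤ k
        · simp [hik, hjk, this]
        · simp only [hik, hjk, if_true, if_false]
          linarith [hmid k hik (not_le.mp hjk)]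
      · have hjk : ¬j ≤ k := fun h => hik (hij.le.trans h)
        simp [hik, hjk, this]
  · push Not at hneg
    obtain ⟨α, hα, hα0, hαv⟩ :=
      exists_mem_typeCPositiveRoots_le_of_nonneg hneg hv0 heven
    refine ⟨α, hα, fun x => ?_, fun k => sum_nonneg fun x _ => sub_nonneg.mpr (hαv x)⟩
    rw [abs_of_nonneg (sub_nonneg.mpr (hαv x)), abs_of_nonneg (hα0 x), abs_of_nonneg (hneg x)]
    ring

theorem exists_typeCPositiveRoots_sum_eq {v : Fin n → ℤ} (hpre : ∀ k, 0 ≤ ∑ x ∈ Iic k, v x)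
    (heven : Even (∑ j, v j)) :
    ∃ l : List (Fin n → ℤ), (∀ u ∈ l, u ∈ typeCPositiveRoots n) ∧ l.sum = v ∧
      2 * (l.length : ℤ) = ∑ j, |v j| := by
  induction hm : (∑ j, |v j|).toNat using Nat.strong_induction_on generalizing v with
  | _ m ih =>
  by_cases hv0 : v = 0
  · exact ⟨[], by simp, by simp [hv0], by simp [hv0]⟩
  obtain ⟨α, hα, hcancel, hpre'⟩ := exists_typeCPositiveRoots_greedy_step hv0 hpre heven
  have hnorm : ∑ j, |v j - α j| + 2 = ∑ j, |v j| := by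
    rw [← sum_abs_eq_two_of_mem_typeCPositiveRoots hα, ← sum_add_distrib]
    exact sum_congr rfl fun x _ => hcancel x
  have heven' : Even (∑ j, (v j - α j)) := by
    simpa [sum_sub_distrib] using heven.sub (even_sum_of_mem_typeCPositiveRoots hα)
  obtain ⟨l, hl, hlsum, hllen⟩ :=
    ih _ (by have := sum_nonneg fun j (_ : j ∈ univ) => abs_nonneg (v j - α j); omega)
      hpre' heven' rfl
  refine ⟨α :: l, List.forall_mem_cons.mpr ⟨hα, hl⟩, ?_, ?_⟩
  · ext x
    simp [hlsum]
  rw [List.length_cons]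
  push_cast
  linarith

theorem isLeast_typeCDecompLengths {v : Fin n → ℤ} (hpre : ∀ k, 0 ≤ ∑ x ∈ Iic k, v x)
    (heven : Even (∑ j, v j)) {d : ℕ} (hd : 2 * (d : ℤ) = ∑ j, |v j|) :
    IsLeast (typeCDecompLengths n v) d := by
  refine ⟨?_, fun N hN => ?_⟩
  · obtain ⟨l, hl, hlsum, hllen⟩ := exists_typeCPositiveRoots_sum_eq hpre heven
    exact ⟨l, hl, hlsum, by omega⟩
  · have := sum_abs_le_two_mul_of_mem_typeCDecompLengths hN
    omega

def typeCExtremalDegree (lam : Fin n → ℤ) (σ : Equiv.Perm (Fin n)) (s : Fin n → ℤ) : ℤ :=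
  (∑ i ∈ univ.filter (fun i : Fin n => s i = 1 ∧ i < σ i), (lam i - lam (σ i))) +
    ∑ i ∈ univ.filter (fun i : Fin n => s i = -1), lam i

section SignedPermutation

variable {lam : Fin n → ℤ} {σ : Equiv.Perm (Fin n)} {s : Fin n → ℤ}

theorem typeCExtremalDegree_nonneg (hlam : Antitone lam) (hlam0 : ∀ i, 0 ≤ lam i) :
    0 ≤ typeCExtremalDegree lam σ s :=
  add_nonneg (sum_nonneg fun _ hi => sub_nonneg.mpr (hlam (mem_filter.mp hi).2.2.le))
    (sum_nonneg fun i _ => hlam0 i)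

theorem typeCExtremalDegree_add (mu : Fin n → ℤ) :
    typeCExtremalDegree (lam + mu) σ s =
      typeCExtremalDegree lam σ s + typeCExtremalDegree mu σ s := by
  simp only [typeCExtremalDegree, Pi.add_apply, sum_add_distrib, add_sub_add_comm]
  ring

theorem even_sum_sub_signedPerm (hs : ∀ i, s i = 1 ∨ s i = -1) :
    Even (∑ j, (lam j - s (σ.symm j) * lam (σ.symm j))) := by
  rw [sum_sub_distrib, Equiv.sum_comp σ.symm (fun i => s i * lam i), ← sum_sub_distrib]
  refine even_sum _ fun i _ => ?_
  rcases hs i with h | h <;> simp [h, ← two_mul]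

theorem prefix_nonneg_sub_signedPerm (hlam : Antitone lam) (hlam0 : ∀ i, 0 ≤ lam i)
    (hs : ∀ i, s i = 1 ∨ s i = -1) (k : Fin n) :
    0 ≤ ∑ j ∈ Iic k, (lam j - s (σ.symm j) * lam (σ.symm j)) := by
  have hsign : ∀ i, s i * lam i ≤ lam i := fun i => by
    rcases hs i with h | h <;> simp only [h] <;> linarith [hlam0 i]
  have hrearrange : ∑ j ∈ Iic k, lam (σ.symm j) ≤ ∑ j ∈ Iic k, lam j :=
    (sum_map (Iic k) σ.symm.toEmbedding lam).symm.trans_le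
      (sum_le_sum_Iic_of_antitone hlam (card_map _))
  rw [sum_sub_distrib, sub_nonneg]
  exact (sum_le_sum fun j _ => hsign (σ.symm j)).trans hrearrange

theorem sum_abs_sub_signedPerm (hlam : Antitone lam) (hlam0 : ∀ i, 0 ≤ lam i)
    (hs : ∀ i, s i = 1 ∨ s i = -1) :
    ∑ j, |lam j - s (σ.symm j) * lam (σ.symm j)| = 2 * typeCExtremalDegree lam σ s := by
  have hpoint : ∀ i, |lam (σ i) - s i * lam i| =
      2 * (if s i = 1 ∧ i < σ i then lam i - lam (σ i) else 0) +
        2 * (if s i = -1 then lam i else 0) + (lam (σ i) - lam i) := fun i => by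
    have := hlam0 i
    have := hlam0 (σ i)
    rcases hs i with h | h
    · rcases lt_or_ge i (σ i) with hi | hi
      · have := hlam hi.le
        simp [h, hi, abs_of_nonpos (by linarith : lam (σ i) - lam i ≤ 0)]
        ring
      · have := hlam hi
        simp [h, not_lt.mpr hi, abs_of_nonneg (by linarith : 0 ≤ lam (σ i) - lam i)]
    · simp [h, abs_of_nonneg (by linarith : 0 ≤ lam (σ i) + lam i)]
      ring
  rw [← Equiv.sum_comp σ, typeCExtremalDegree, sum_filter, sum_filter, mul_add, mul_sum, mul_sum]
  simp only [Equiv.symm_apply_apply, hpoint, sum_add_distrib, sum_sub_distrib,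
    Equiv.sum_comp σ lam]
  ring

end SignedPermutation

theorem isLeast_typeCDecompLengths_sub_signedPerm {lam : Fin n → ℤ} (hlam : Antitone lam)
    (hlam0 : ∀ i, 0 ≤ lam i) (σ : Equiv.Perm (Fin n)) {s : Fin n → ℤ}
    (hs : ∀ i, s i = 1 ∨ s i = -1) :
    IsLeast (typeCDecompLengths n (fun j => lam j - s (σ.symm j) * lam (σ.symm j)))
      (typeCExtremalDegree lam σ s).toNat :=
  isLeast_typeCDecompLengths (prefix_nonneg_sub_signedPerm hlam hlam0 hs)
    (even_sum_sub_signedPerm hs) (by rw [sum_abs_sub_signedPerm hlam hlam0 hs,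
      Int.toNat_of_nonneg (typeCExtremalDegree_nonneg hlam hlam0)])

theorem extremal_kostant_degree_typeC_general (n : ℕ)
    (lam : Fin n → ℤ)
    (hdec : ∀ i j : Fin n, i ≤ j → lam j ≤ lam i) (hpos : ∀ i, 0 ≤ lam i)
    (σ : Equiv.Perm (Fin n)) (s : Fin n → ℤ) (hs : ∀ i, s i = 1 ∨ s i = -1) :
    IsLeast (typeCDecompLengths n
        (fun j => lam j - s (σ.symm j) * lam (σ.symm j)))
      (((∑ i ∈ Finset.univ.filter (fun i : Fin n => s i = 1 ∧ i < σ i),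
          (lam i - lam (σ i))) +
        (∑ i ∈ Finset.univ.filter (fun i : Fin n => s i = -1), lam i)).toNat) ∧
    (∀ mu : Fin n → ℤ, (∀ i j : Fin n, i ≤ j → mu j ≤ mu i) → (∀ i, 0 ≤ mu i) →
      sInf (typeCDecompLengths n
          (fun j => (lam j + mu j) - s (σ.symm j) * (lam (σ.symm j) + mu (σ.symm j)))) =
        sInf (typeCDecompLengths n (fun j => lam j - s (σ.symm j) * lam (σ.symm j))) +
        sInf (typeCDecompLengths n (fun j => mu j - s (σ.symm j) * mu (σ.symm j)))) := by
  have hlam : Antitone lam := fun i j h => hdec i j h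
  refine ⟨isLeast_typeCDecompLengths_sub_signedPerm hlam hpos σ hs, fun mu hdec' hpos' => ?_⟩
  have hmu : Antitone mu := fun i j h => hdec' i j h
  rw [(isLeast_typeCDecompLengths_sub_signedPerm (hlam.add hmu)
      (fun i => add_nonneg (hpos i) (hpos' i)) σ hs).csInf_eq,
    (isLeast_typeCDecompLengths_sub_signedPerm hlam hpos σ hs).csInf_eq,
    (isLeast_typeCDecompLengths_sub_signedPerm hmu hpos' σ hs).csInf_eq,
    ← Int.toNat_add (typeCExtremalDegree_nonneg hlam hpos)
      (typeCExtremalDegree_nonneg hmu hpos')]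
  exact congrArg Int.toNat (typeCExtremalDegree_add mu)

/-- Explicit extremal Kostant degree in type `C_n`.  A signed permutation is encoded
as a permutation `σ` of `{1,…,n}` together with signs `s i ∈ {±1}`; it acts by
`w(ε_i) = s(i) • ε_{σ(i)}`, so that `(λ - w(λ))_j = λ_j - s(σ⁻¹ j) * λ_{σ⁻¹ j}`.
The conditions `w(i) > i` and `w(i) < 0` become `s i = 1 ∧ i < σ i` and `s i = -1`.
For a dominant weight `λ` (nonincreasing, nonnegative), `λ - w(λ)` is a sum of
positive roots of `C_n` and
`n(λ,w) = Σ_{i : w(i) > i} (λ_i - λ_{w(i)}) + Σ_{i : w(i) < 0} λ_i`;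
in particular `n(λ+μ,w) = n(λ,w) + n(μ,w)` for all dominant `λ, μ`. -/
theorem extremal_kostant_degree_typeC (n : ℕ) (hn : 1 ≤ n)
    (lam : Fin n → ℤ)
    (hdec : ∀ i j : Fin n, i ≤ j → lam j ≤ lam i) (hpos : ∀ i, 0 ≤ lam i)
    (σ : Equiv.Perm (Fin n)) (s : Fin n → ℤ) (hs : ∀ i, s i = 1 ∨ s i = -1) :
    IsLeast (typeCDecompLengths n
        (fun j => lam j - s (σ.symm j) * lam (σ.symm j)))
      (((∑ i ∈ Finset.univ.filter (fun i : Fin n => s i = 1 ∧ i < σ i),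
          (lam i - lam (σ i))) +
        (∑ i ∈ Finset.univ.filter (fun i : Fin n => s i = -1), lam i)).toNat) ∧
    (∀ mu : Fin n → ℤ, (∀ i j : Fin n, i ≤ j → mu j ≤ mu i) → (∀ i, 0 ≤ mu i) →
      sInf (typeCDecompLengths n
          (fun j => (lam j + mu j) - s (σ.symm j) * (lam (σ.symm j) + mu (σ.symm j)))) =
        sInf (typeCDecompLengths n (fun j => lam j - s (σ.symm j) * lam (σ.symm j))) +
        sInf (typeCDecompLengths n (fun j => mu j - s (σ.symm j) * mu (σ.symm j)))) :=
  extremal_kostant_degree_typeC_general n lam hdec hpos σ s hs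
end

section
/- Untwisted reflection formula outside G₂: let R be a finite reduced irreducible crystallographic root system with positive roots R₊ such that (β, α∨) ∈ {−2,−1,0,1,2} for all α, β ∈ R (this excludes exactly type G₂). Then for every dominant weight λ and every α ∈ R₊, the vector λ − s_α(λ) = (λ,α∨)·α satisfies n(λ, s_α) = (λ, α∨). -/
open scoped RealInnerProductSpace

/-- A finite reduced irreducible crystallographic root system in a real inner
product space `V`. -/
structure IsRootSystem {V : Type*} [NormedAddCommGroup V] [InnerProductSpace ℝ V]
    (R : Set V) : Prop where
  finite : R.Finite
  span_top : Submodule.span ℝ R = ⊤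
  ne_zero : ∀ α ∈ R, α ≠ (0 : V)
  reflect_mem : ∀ α ∈ R, ∀ β ∈ R, β - (2 * ⟪β, α⟫ / ⟪α, α⟫) • α ∈ R
  integral : ∀ α ∈ R, ∀ β ∈ R, ∃ k : ℤ, 2 * ⟪β, α⟫ / ⟪α, α⟫ = (k : ℝ)
  reduced : ∀ α ∈ R, ∀ c : ℝ, c • α ∈ R → c = 1 ∨ c = -1
  irreducible : ¬ ∃ R₁ R₂ : Set V, R₁.Nonempty ∧ R₂.Nonempty ∧ R = R₁ ∪ R₂ ∧
    ∀ α ∈ R₁, ∀ β ∈ R₂, ⟪α, β⟫ = 0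

/-- The set of positive roots determined by a linear functional `f` nonvanishing
on the roots. -/
def posRoots {V : Type*} [NormedAddCommGroup V] [InnerProductSpace ℝ V]
    (R : Set V) (f : V →ₗ[ℝ] ℝ) : Set V :=
  {α | α ∈ R ∧ 0 < f α}

/-- The set of lengths of decompositions of `μ` into a sum of positive roots
(with repetitions). -/
def decompLengths {V : Type*} [NormedAddCommGroup V] [InnerProductSpace ℝ V]
    (P : Set V) (μ : V) : Set ℕ :=
  {N | ∃ l : List V, (∀ β ∈ l, β ∈ P) ∧ l.sum = μ ∧ l.length = N}

/-! Pair a decomposition `k • α = β₁ + ⋯ + β_N` with the coroot `α∨`. Outside `G₂` every root `β`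
satisfies `(β, α∨) ≤ 2`, i.e. `⟪β, α⟫ ≤ ⟪α, α⟫`, so `2k = (k • α, α∨) ≤ 2N`; the decomposition
into `k` copies of `α` attains the bound. -/

section

variable {V : Type*} [NormedAddCommGroup V] [InnerProductSpace ℝ V]

lemma inner_le_inner_self_of_pairing_le_two {α β : V} (hα : α ≠ 0)
    (h : 2 * ⟪β, α⟫ / ⟪α, α⟫ ≤ 2) : ⟪β, α⟫ ≤ ⟪α, α⟫ := by
  have hpos : 0 < ⟪α, α⟫ := real_inner_self_pos.mpr hα
  rw [div_le_iff₀ hpos] at h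
  linarith

lemma inner_list_sum_left_le {α : V} {c : ℝ} (l : List V) (hl : ∀ β ∈ l, ⟪β, α⟫ ≤ c) :
    ⟪l.sum, α⟫ ≤ l.length * c := by
  induction l with
  | nil => simp
  | cons β l ih =>
    simp only [List.forall_mem_cons] at hl
    rw [List.sum_cons, inner_add_left, List.length_cons, Nat.cast_succ]
    linarith [hl.1, ih hl.2]

lemma le_length_of_sum_eq_natCast_smul {α : V} (hα : α ≠ 0) {k : ℕ} {l : List V}
    (hl : ∀ β ∈ l, ⟪β, α⟫ ≤ ⟪α, α⟫) (hsum : l.sum = (k : ℝ) • α) : k ≤ l.length := by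
  have hpos : 0 < ⟪α, α⟫ := real_inner_self_pos.mpr hα
  have hbound := inner_list_sum_left_le l hl
  rw [hsum, real_inner_smul_left] at hbound
  exact_mod_cast le_of_mul_le_mul_right hbound hpos

lemma isLeast_decompLengths_natCast_smul {P : Set V} {α : V} (hαP : α ∈ P) (hα : α ≠ 0)
    (hP : ∀ β ∈ P, ⟪β, α⟫ ≤ ⟪α, α⟫) (k : ℕ) :
    IsLeast (decompLengths P ((k : ℝ) • α)) k := by
  refine ⟨⟨List.replicate k α, ?_, ?_, List.length_replicate⟩, ?_⟩
  · intro β hβ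
    rwa [List.eq_of_mem_replicate hβ]
  · rw [List.sum_replicate, Nat.cast_smul_eq_nsmul]
  · rintro N ⟨l, hlP, hsum, rfl⟩
    exact le_length_of_sum_eq_natCast_smul hα (fun β hβ => hP β (hlP β hβ)) hsum

end

theorem reflection_formula_untwisted_general {V : Type*} [NormedAddCommGroup V]
    [InnerProductSpace ℝ V]
    (R : Set V) (hR : IsRootSystem R)
    (f : V →ₗ[ℝ] ℝ)
    (hnoG2 : ∀ α ∈ R, ∀ β ∈ R,
      2 * ⟪β, α⟫ / ⟪α, α⟫ = -2 ∨ 2 * ⟪β, α⟫ / ⟪α, α⟫ = -1 ∨ 2 * ⟪β, α⟫ / ⟪α, α⟫ = 0 ∨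
      2 * ⟪β, α⟫ / ⟪α, α⟫ = 1 ∨ 2 * ⟪β, α⟫ / ⟪α, α⟫ = 2)
    (lam : V)
    (α : V) (hα : α ∈ posRoots R f)
    (k : ℕ) (hk : 2 * ⟪lam, α⟫ / ⟪α, α⟫ = (k : ℝ)) :
    IsLeast (decompLengths (posRoots R f) ((2 * ⟪lam, α⟫ / ⟪α, α⟫) • α)) k := by
  have hα0 : α ≠ 0 := hR.ne_zero α hα.1
  have hpairing : ∀ β ∈ posRoots R f, ⟪β, α⟫ ≤ ⟪α, α⟫ := by
    intro β hβ
    apply inner_le_inner_self_of_pairing_le_two hα0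
    rcases hnoG2 α hα.1 β hβ.1 with h | h | h | h | h <;> rw [h] <;> norm_num
  rw [hk]
  exact isLeast_decompLengths_natCast_smul hα hα0 hpairing k

/-- Untwisted reflection formula outside `G₂`: if all Cartan pairings of `R` lie in
`{-2,…,2}` (which excludes exactly type `G₂`), then for every dominant weight `λ`
and every positive root `α`, the vector `λ - s_α(λ) = (λ,α∨) • α` is a sum of
positive roots and the minimal number of positive roots summing to it equals
`(λ, α∨)`. -/
theorem reflection_formula_untwisted {V : Type*} [NormedAddCommGroup V]
    [InnerProductSpace ℝ V] [FiniteDimensional ℝ V]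
    (R : Set V) (hR : IsRootSystem R)
    (f : V →ₗ[ℝ] ℝ) (hf : ∀ α ∈ R, f α ≠ 0)
    (hnoG2 : ∀ α ∈ R, ∀ β ∈ R,
      2 * ⟪β, α⟫ / ⟪α, α⟫ = -2 ∨ 2 * ⟪β, α⟫ / ⟪α, α⟫ = -1 ∨ 2 * ⟪β, α⟫ / ⟪α, α⟫ = 0 ∨
      2 * ⟪β, α⟫ / ⟪α, α⟫ = 1 ∨ 2 * ⟪β, α⟫ / ⟪α, α⟫ = 2)
    (lam : V) (hlam : ∀ α ∈ posRoots R f, ∃ k : ℕ, 2 * ⟪lam, α⟫ / ⟪α, α⟫ = (k : ℝ))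
    (α : V) (hα : α ∈ posRoots R f)
    (k : ℕ) (hk : 2 * ⟪lam, α⟫ / ⟪α, α⟫ = (k : ℝ)) :
    IsLeast (decompLengths (posRoots R f) ((2 * ⟪lam, α⟫ / ⟪α, α⟫) • α)) k :=
  reflection_formula_untwisted_general R hR f hnoG2 lam α hα k hk
end

section
/- Twisted reflection formula for short roots: let R be a finite reduced irreducible crystallographic root system with positive roots R₊ (type G₂ is allowed). Then for every dominant weight λ and every short positive root α (i.e., α ∈ R₊ with (α,α) = min{(γ,γ) : γ ∈ R}), one has n^ν(λ, s_α) = (λ, α∨). -/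
open scoped RealInnerProductSpace

/-- The set of twisted weights `ν_{β₁} + ⋯ + ν_{β_M}` over decompositions of `μ`
into positive roots (with repetitions), where `ν_β = (β,β)/m₀` and `m₀` is the
minimal squared root length.  A decomposition is encoded as a list of pairs
`(β, ν_β)`. -/
def twistedDecompWeights {V : Type*} [NormedAddCommGroup V] [InnerProductSpace ℝ V]
    (P : Set V) (m₀ : ℝ) (μ : V) : Set ℕ :=
  {N | ∃ l : List (V × ℕ),
    (∀ p ∈ l, p.1 ∈ P ∧ ⟪p.1, p.1⟫ = (p.2 : ℝ) * m₀) ∧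
    (l.map Prod.fst).sum = μ ∧ (l.map Prod.snd).sum = N}

/-!
Writing `λ - s_α(λ) = k α` with `k = (λ, α∨)`, the decomposition into `k` copies of `α` has
twisted weight `k`. Conversely, pair a decomposition `k α = β₁ + ⋯ + β_M` with `α`: since `α` is
short, Cauchy–Schwarz gives `(β_j, α) ≤ |β_j| |α| ≤ (β_j, β_j) = ν_{β_j} m₀`, and summing yields
`k m₀ = (k α, α) ≤ (ν_{β₁} + ⋯ + ν_{β_M}) m₀`.
-/

section

variable {V : Type*} [NormedAddCommGroup V] [InnerProductSpace ℝ V]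

lemma ne_zero_of_mem_posRoots {R : Set V} {f : V →ₗ[ℝ] ℝ} {β : V} (hβ : β ∈ posRoots R f) :
    β ≠ 0 := by
  rintro rfl
  simp [posRoots] at hβ

lemma real_inner_le_real_inner_self_of_norm_le {α β : V} (h : ‖α‖ ≤ ‖β‖) : ⟪β, α⟫ ≤ ⟪β, β⟫ :=
  calc ⟪β, α⟫ ≤ ‖β‖ * ‖α‖ := real_inner_le_norm β α
    _ ≤ ‖β‖ * ‖β‖ := by gcongr
    _ = ⟪β, β⟫ := (real_inner_self_eq_norm_mul_norm β).symm

lemma real_inner_list_sum_fst_le {α : V} {c : ℝ} :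
    ∀ l : List (V × ℕ), (∀ p ∈ l, ⟪p.1, α⟫ ≤ p.2 * c) →
      ⟪(l.map Prod.fst).sum, α⟫ ≤ ((l.map Prod.snd).sum : ℕ) * c
  | [], _ => by simp
  | p :: l, h => by
    have hp := h p List.mem_cons_self
    have hl := real_inner_list_sum_fst_le l fun q hq => h q (List.mem_cons_of_mem p hq)
    simp only [List.map_cons, List.sum_cons, inner_add_left, Nat.cast_add, add_mul]
    linarith

lemma natCast_mem_twistedDecompWeights_smul {P : Set V} {m₀ : ℝ} {α : V} (hα : α ∈ P)
    (hαα : ⟪α, α⟫ = m₀) (k : ℕ) : k ∈ twistedDecompWeights P m₀ ((k : ℝ) • α) := by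
  refine ⟨List.replicate k (α, 1), fun p hp => ?_, ?_, ?_⟩
  · rw [List.eq_of_mem_replicate hp]
    exact ⟨hα, by simpa using hαα⟩
  · simp [List.map_replicate, List.sum_replicate, Nat.cast_smul_eq_nsmul]
  · simp [List.map_replicate, List.sum_replicate]

lemma real_inner_le_of_mem_twistedDecompWeights {P : Set V} {m₀ : ℝ} {μ α : V} {N : ℕ}
    (hP : ∀ β ∈ P, m₀ ≤ ⟪β, β⟫) (hαα : ⟪α, α⟫ = m₀) (hN : N ∈ twistedDecompWeights P m₀ μ) :
    ⟪μ, α⟫ ≤ N * m₀ := by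
  obtain ⟨l, hl, rfl, rfl⟩ := hN
  refine real_inner_list_sum_fst_le l fun p hp => ?_
  obtain ⟨hpP, hpp⟩ := hl p hp
  have hnorm : ‖α‖ ≤ ‖p.1‖ := by
    rw [← sq_le_sq₀ (norm_nonneg _) (norm_nonneg _), ← real_inner_self_eq_norm_sq,
      ← real_inner_self_eq_norm_sq, hαα]
    exact hP p.1 hpP
  exact hpp ▸ real_inner_le_real_inner_self_of_norm_le hnorm

end

theorem twisted_reflection_formula_short_general {V : Type*} [NormedAddCommGroup V]
    [InnerProductSpace ℝ V]
    (R : Set V)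
    (f : V →ₗ[ℝ] ℝ)
    (m₀ : ℝ) (hm₀ : IsLeast {x : ℝ | ∃ γ ∈ R, x = ⟪γ, γ⟫} m₀)
    (lam : V)
    (α : V) (hα : α ∈ posRoots R f) (hshort : ⟪α, α⟫ = m₀)
    (k : ℕ) (hk : 2 * ⟪lam, α⟫ / ⟪α, α⟫ = (k : ℝ)) :
    IsLeast (twistedDecompWeights (posRoots R f) m₀ ((2 * ⟪lam, α⟫ / ⟪α, α⟫) • α)) k := by
  have hm₀_pos : 0 < m₀ := hshort ▸ real_inner_self_pos.2 (ne_zero_of_mem_posRoots hα)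
  rw [hk]
  refine ⟨natCast_mem_twistedDecompWeights_smul hα hshort k, fun N hN => ?_⟩
  have hbound := real_inner_le_of_mem_twistedDecompWeights
    (fun β hβ => hm₀.2 ⟨β, hβ.1, rfl⟩) hshort hN
  rw [real_inner_smul_left, hshort] at hbound
  exact_mod_cast le_of_mul_le_mul_right hbound hm₀_pos

/-- Twisted reflection formula for short roots: for every dominant weight `λ` and
every short positive root `α` (type `G₂` allowed), `n^ν(λ, s_α) = (λ, α∨)`;
here `λ - s_α(λ) = (λ,α∨) • α`. -/
theorem twisted_reflection_formula_short {V : Type*} [NormedAddCommGroup V]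
    [InnerProductSpace ℝ V] [FiniteDimensional ℝ V]
    (R : Set V) (hR : IsRootSystem R)
    (f : V →ₗ[ℝ] ℝ) (hf : ∀ α ∈ R, f α ≠ 0)
    (m₀ : ℝ) (hm₀ : IsLeast {x : ℝ | ∃ γ ∈ R, x = ⟪γ, γ⟫} m₀)
    (lam : V) (hlam : ∀ α ∈ posRoots R f, ∃ k : ℕ, 2 * ⟪lam, α⟫ / ⟪α, α⟫ = (k : ℝ))
    (α : V) (hα : α ∈ posRoots R f) (hshort : ⟪α, α⟫ = m₀)
    (k : ℕ) (hk : 2 * ⟪lam, α⟫ / ⟪α, α⟫ = (k : ℝ)) :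
    IsLeast (twistedDecompWeights (posRoots R f) m₀ ((2 * ⟪lam, α⟫ / ⟪α, α⟫) • α)) k :=
  twisted_reflection_formula_short_general R f m₀ hm₀ lam α hα hshort k hk
end

section
/- Twisted reflection formula outside G₂: let R be a finite reduced irreducible crystallographic root system with positive roots R₊ such that (β, α∨) ∈ {−2,−1,0,1,2} for all α, β ∈ R (this excludes exactly type G₂). Then for every dominant weight λ and every α ∈ R₊, one has n^ν(λ, s_α) = ν_α · (λ, α∨). -/
open scoped RealInnerProductSpace

private lemma real_inner_self_pos' {V : Type*} [NormedAddCommGroup V] [InnerProductSpace ℝ V]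
    {x : V} (hx : x ≠ 0) : 0 < ⟪x, x⟫ :=
  lt_of_le_of_ne real_inner_self_nonneg (Ne.symm (inner_self_ne_zero.2 hx))

private lemma inner_list_sum {V : Type*} [NormedAddCommGroup V] [InnerProductSpace ℝ V]
    (l : List V) (x : V) : ⟪l.sum, x⟫ = (l.map (fun v => ⟪v, x⟫)).sum := by
  induction l with
  | nil => simp
  | cons a t ih => simp [inner_add_left, ih]

/-- Twisted reflection formula outside `G₂`: if all Cartan pairings of `R` lie in
`{-2,…,2}` (which excludes exactly type `G₂`), then for every dominant weight `λ`
and every positive root `α`, `n^ν(λ, s_α) = ν_α · (λ, α∨)`, where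
`ν_α = (α,α)/m₀` and `λ - s_α(λ) = (λ,α∨) • α`. -/
theorem twisted_reflection_formula {V : Type*} [NormedAddCommGroup V]
    [InnerProductSpace ℝ V] [FiniteDimensional ℝ V]
    (R : Set V) (hR : IsRootSystem R)
    (f : V →ₗ[ℝ] ℝ) (hf : ∀ α ∈ R, f α ≠ 0)
    (hnoG2 : ∀ α ∈ R, ∀ β ∈ R,
      2 * ⟪β, α⟫ / ⟪α, α⟫ = -2 ∨ 2 * ⟪β, α⟫ / ⟪α, α⟫ = -1 ∨ 2 * ⟪β, α⟫ / ⟪α, α⟫ = 0 ∨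
      2 * ⟪β, α⟫ / ⟪α, α⟫ = 1 ∨ 2 * ⟪β, α⟫ / ⟪α, α⟫ = 2)
    (m₀ : ℝ) (hm₀ : IsLeast {x : ℝ | ∃ γ ∈ R, x = ⟪γ, γ⟫} m₀)
    (lam : V) (hlam : ∀ α ∈ posRoots R f, ∃ k : ℕ, 2 * ⟪lam, α⟫ / ⟪α, α⟫ = (k : ℝ))
    (α : V) (hα : α ∈ posRoots R f)
    (k : ℕ) (hk : 2 * ⟪lam, α⟫ / ⟪α, α⟫ = (k : ℝ))
    (c : ℕ) (hc : ⟪α, α⟫ = (c : ℝ) * m₀) :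
    IsLeast (twistedDecompWeights (posRoots R f) m₀ ((2 * ⟪lam, α⟫ / ⟪α, α⟫) • α))
      (c * k) := by
  have hαR : α ∈ R := hα.1
  -- m₀ > 0
  obtain ⟨γ, hγR, hγeq⟩ := hm₀.1
  have hm₀pos : 0 < m₀ := by
    rw [hγeq]; exact real_inner_self_pos' (hR.ne_zero γ hγR)
  constructor
  · -- membership: k copies of (α, c)
    refine ⟨List.replicate k (α, c), ?_, ?_, ?_⟩
    · intro p hp
      rw [List.eq_of_mem_replicate hp]
      exact ⟨hα, hc⟩
    · rw [List.map_replicate, List.sum_replicate, hk]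
      simp [Nat.cast_smul_eq_nsmul ℝ]
    · rw [List.map_replicate, List.sum_replicate]
      simp [mul_comm]
  · -- lower bound
    rintro N ⟨l, hl, hsum, hN⟩
    have key : ∀ p ∈ l, ⟪p.1, α⟫ ≤ (p.2 : ℝ) * m₀ := by
      intro p hp
      obtain ⟨⟨hpR, _⟩, hpν⟩ := hl p hp
      have hppos : (0:ℝ) < ⟪p.1, p.1⟫ := real_inner_self_pos' (hR.ne_zero _ hpR)
      have h2 : 2 * ⟪α, p.1⟫ / ⟪p.1, p.1⟫ ≤ 2 := by
        rcases hnoG2 p.1 hpR α hαR with h | h | h | h | h <;> rw [h] <;> norm_num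
      have := (div_le_iff₀ hppos).1 h2
      rw [← hpν, real_inner_comm]
      linarith
    have hchain : ((c * k : ℕ) : ℝ) * m₀ ≤ (N : ℝ) * m₀ := by
      have h1 : ⟪((l.map Prod.fst).sum : V), α⟫ = (k : ℝ) * ⟪α, α⟫ := by
        rw [hsum, hk, real_inner_smul_left]
      have h2 : ⟪((l.map Prod.fst).sum : V), α⟫
          ≤ ((l.map (fun p : V × ℕ => (p.2 : ℝ) * m₀)).sum) := by
        rw [inner_list_sum, List.map_map]
        exact List.sum_le_sum (fun p hp => key p hp)
      have h3 : ((l.map (fun p : V × ℕ => (p.2 : ℝ) * m₀)).sum) = (N : ℝ) * m₀ := by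
        rw [← hN]
        push_cast
        rw [← List.sum_map_mul_right, List.map_map]
        rfl
      have h4 : ((c * k : ℕ) : ℝ) * m₀ = (k : ℝ) * ⟪α, α⟫ := by
        rw [hc]; push_cast; ring
      linarith
    exact_mod_cast le_of_mul_le_mul_right hchain hm₀pos
end

section
/- Exceptional untwisted reflection formula for G₂: in the root system G₂, let α be the short positive root α₁ + α₂ or the short positive root 2α₁ + α₂, and let λ be a dominant weight. Write (λ, α∨) = 3k + r with k ∈ ℤ≥0 and r ∈ {0,1,2}. Then the minimal number of positive roots of G₂ (with repetitions) summing to λ − s_α(λ) = (λ,α∨)·α equals 2k + r. -/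
/-- The `G₂` inner product on the root lattice `ℤ²` spanned by the simple roots
`α₁ = (1,0)` (short) and `α₂ = (0,1)` (long): it is determined by
`(α₁,α₁) = 2`, `(α₂,α₂) = 6`, `(α₁,α₂) = -3`. -/
def g2Form (x y : ℤ × ℤ) : ℤ :=
  2 * x.1 * y.1 + 6 * x.2 * y.2 - 3 * (x.1 * y.2 + x.2 * y.1)

/-- The positive roots of `G₂` in the basis of simple roots. -/
def g2PositiveRoots : Set (ℤ × ℤ) :=
  {(1, 0), (0, 1), (1, 1), (2, 1), (3, 1), (3, 2)}

/-- The set of lengths of decompositions of `v` into a sum of positive roots of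
`G₂` (with repetitions). -/
def g2DecompLengths (v : ℤ × ℤ) : Set ℕ :=
  {N | ∃ l : List (ℤ × ℤ),
    (∀ u ∈ l, u ∈ g2PositiveRoots) ∧ l.sum = v ∧ l.length = N}

/-!
For `α = α₁ + α₂` and `α = 2α₁ + α₂`, three copies of `α` are the sum of two positive roots
(`3(α₁ + α₂) = (3α₁ + 2α₂) + α₂`, `3(2α₁ + α₂) = (3α₁ + α₂) + (3α₁ + 2α₂)`), so `(3k + r)·α`
is a sum of `2k + r` positive roots. Conversely there is a linear functional `φ` with `φ(α) = 2`
that is at most `3` on every positive root (`3c₂ - c₁`, resp. `c₁`, in simple-root coordinates),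
so a sum of `N` positive roots equal to `(3k + r)·α` has `2(3k + r) ≤ 3N`, i.e. `N ≥ 2k + r`
when `r < 3`.
-/

lemma zero_mem_g2DecompLengths_zero : 0 ∈ g2DecompLengths 0 :=
  ⟨[], by simp, rfl, rfl⟩

lemma one_mem_g2DecompLengths {β : ℤ × ℤ} (hβ : β ∈ g2PositiveRoots) :
    1 ∈ g2DecompLengths β :=
  ⟨[β], by simpa using hβ, by simp, rfl⟩

lemma add_mem_g2DecompLengths {v w : ℤ × ℤ} {m n : ℕ} (hm : m ∈ g2DecompLengths v)
    (hn : n ∈ g2DecompLengths w) : m + n ∈ g2DecompLengths (v + w) := by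
  obtain ⟨l, hl, rfl, rfl⟩ := hm
  obtain ⟨l', hl', rfl, rfl⟩ := hn
  refine ⟨l ++ l', ?_, List.sum_append, List.length_append⟩
  simpa only [List.mem_append, or_imp, forall_and] using ⟨hl, hl'⟩

lemma mul_mem_g2DecompLengths_nsmul {v : ℤ × ℤ} {n : ℕ} (hn : n ∈ g2DecompLengths v)
    (c : ℕ) : c * n ∈ g2DecompLengths (c • v) := by
  induction c with
  | zero => simpa using zero_mem_g2DecompLengths_zero
  | succ c ih => simpa [succ_nsmul, add_mul] using add_mem_g2DecompLengths ih hn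

lemma le_mul_of_mem_g2DecompLengths (φ : ℤ × ℤ →+ ℤ) {c : ℤ}
    (hφ : ∀ β ∈ g2PositiveRoots, φ β ≤ c) {v : ℤ × ℤ} {N : ℕ} (hN : N ∈ g2DecompLengths v) :
    φ v ≤ N * c := by
  obtain ⟨l, hl, rfl, rfl⟩ := hN
  calc φ l.sum = (l.map φ).sum := map_list_sum φ l
    _ ≤ (l.map φ).length • c :=
      List.sum_le_card_nsmul _ _ (by simpa only [List.mem_map, forall_exists_index, and_imp,
        forall_apply_eq_imp_iff₂] using fun β hβ ↦ hφ β (hl β hβ))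
    _ = l.length * c := by simp

lemma isLeast_g2DecompLengths_of_three_nsmul_eq_add {α β γ : ℤ × ℤ}
    (hα : α ∈ g2PositiveRoots) (hβ : β ∈ g2PositiveRoots) (hγ : γ ∈ g2PositiveRoots)
    (h3 : 3 • α = β + γ) (φ : ℤ × ℤ →+ ℤ) (hφ : ∀ δ ∈ g2PositiveRoots, φ δ ≤ 3)
    (hφα : φ α = 2) {k r : ℕ} (hr : r < 3) :
    IsLeast (g2DecompLengths ((3 * (k : ℤ) + r) • α)) (2 * k + r) := by
  have hv : (3 * (k : ℤ) + r) • α = k • (β + γ) + r • α := by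
    rw [← h3, ← mul_nsmul', ← add_nsmul, ← natCast_zsmul]
    push_cast
    ring_nf
  refine ⟨?_, fun N hN ↦ ?_⟩
  · rw [hv]
    convert add_mem_g2DecompLengths
      (mul_mem_g2DecompLengths_nsmul (add_mem_g2DecompLengths
        (one_mem_g2DecompLengths hβ) (one_mem_g2DecompLengths hγ)) k)
      (mul_mem_g2DecompLengths_nsmul (one_mem_g2DecompLengths hα) r) using 1
    ring
  · have hφN := le_mul_of_mem_g2DecompLengths φ hφ hN
    rw [map_zsmul, hφα, smul_eq_mul] at hφN
    omega

theorem g2_exceptional_reflection_formula_general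
    (lam : ℤ × ℤ)
    (α : ℤ × ℤ) (hα : α = (1, 1) ∨ α = (2, 1))
    (k r : ℕ) (hr : r < 3)
    (hkr : g2Form lam α = 3 * (k : ℤ) + (r : ℤ)) :
    IsLeast (g2DecompLengths ((g2Form lam α) • α)) (2 * k + r) := by
  rw [hkr]
  rcases hα with rfl | rfl
  · refine isLeast_g2DecompLengths_of_three_nsmul_eq_add (β := (3, 2)) (γ := (0, 1))
      (by simp [g2PositiveRoots]) (by simp [g2PositiveRoots]) (by simp [g2PositiveRoots])
      (by decide) (3 • AddMonoidHom.snd ℤ ℤ - AddMonoidHom.fst ℤ ℤ) ?_ (by decide) hr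
    simp [g2PositiveRoots]
  · refine isLeast_g2DecompLengths_of_three_nsmul_eq_add (β := (3, 1)) (γ := (3, 2))
      (by simp [g2PositiveRoots]) (by simp [g2PositiveRoots]) (by simp [g2PositiveRoots])
      (by decide) (AddMonoidHom.fst ℤ ℤ) ?_ rfl hr
    simp [g2PositiveRoots]

/-- Exceptional untwisted reflection formula for `G₂`: for `α` one of the short
positive roots `α₁ + α₂` or `2α₁ + α₂` and a dominant weight `λ`, writing
`(λ, α∨) = 3k + r` with `r ∈ {0,1,2}`, the minimal number of positive roots of
`G₂` summing to `λ - s_α(λ) = (λ,α∨)·α` equals `2k + r`.  Since `α` is short,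
`(λ, α∨) = g2Form λ α`; dominance means `(λ,α₁∨) = g2Form λ (1,0) ∈ ℤ≥0` and
`(λ,α₂∨) = g2Form λ (0,1)/3 ∈ ℤ≥0`. -/
theorem g2_exceptional_reflection_formula
    (lam : ℤ × ℤ)
    (hdom1 : 0 ≤ g2Form lam (1, 0))
    (hdom2 : ∃ m : ℕ, g2Form lam (0, 1) = 3 * (m : ℤ))
    (α : ℤ × ℤ) (hα : α = (1, 1) ∨ α = (2, 1))
    (k r : ℕ) (hr : r < 3)
    (hkr : g2Form lam α = 3 * (k : ℤ) + (r : ℤ)) :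
    IsLeast (g2DecompLengths ((g2Form lam α) • α)) (2 * k + r) :=
  g2_exceptional_reflection_formula_general lam α hα k r hr hkr
end

section
/- Extremal Kostant degree of the highest root (untwisted): let R be a finite reduced irreducible crystallographic root system with positive roots R₊, Weyl group W, and highest root θ. Then for every w ∈ W: n(θ, w) = 0 if w(θ) = θ; n(θ, w) = 1 if (w(θ), θ) > 0 and w(θ) ≠ θ; and n(θ, w) = 2 if (w(θ), θ) ≤ 0. -/
/-!
Of `θ` the argument only uses that it is a root at which `f` is maximal on `R`. Then every other
root `β` with `(β, θ) > 0` has `f β < f θ`, because `θ - β` is a root; applied to `s_θ β` this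
forces `(β, θ∨) = 1`, and it also shows that roots pairing positively with `θ` are positive.
Hence for a root `v` (here `v = w θ`): if `(v, θ) > 0` and `v ≠ θ`, then `θ - v` is a positive
root; if `(v, θ) ≤ 0`, then `θ - v` is not a root, since `(θ - v, θ) ≥ (θ, θ)` would force
`θ - v = θ`, yet it is a sum of two positive roots: `θ + (-v)` if `(v, θ) < 0`, and
`(θ - δ) + (δ - v)` if `v ⊥ θ`, where irreducibility supplies a root `δ` with `(δ, θ∨) = 1` and
`(δ, v) > 0`.
-/


open scoped RealInnerProductSpace

/-- The simple roots: positive roots which are not sums of two positive roots. -/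
def simpleRoots {V : Type*} [NormedAddCommGroup V] [InnerProductSpace ℝ V]
    (R : Set V) (f : V →ₗ[ℝ] ℝ) : Set V :=
  {α | α ∈ posRoots R f ∧ ¬ ∃ β ∈ posRoots R f, ∃ γ ∈ posRoots R f, α = β + γ}

/-- The reflection `s_α : x ↦ x - (x,α∨) α`, as a self-map of `V`. -/
noncomputable def rootReflection {V : Type*} [NormedAddCommGroup V]
    [InnerProductSpace ℝ V] (α : V) : Function.End V :=
  fun x => x - (2 * ⟪x, α⟫ / ⟪α, α⟫) • α

/-- The Weyl group, realized as the submonoid of self-maps of `V` generated by the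
reflections in the roots (each reflection is an involution, so this is the group
generated by them). -/
noncomputable def weylMonoid {V : Type*} [NormedAddCommGroup V]
    [InnerProductSpace ℝ V] (R : Set V) : Submonoid (Function.End V) :=
  Submonoid.closure {g | ∃ α ∈ R, g = rootReflection α}

section RootSystems

variable {V : Type*} [NormedAddCommGroup V] [InnerProductSpace ℝ V]

section DecompLengths

variable {P : Set V} {μ : V}

lemma zero_mem_decompLengths_iff : 0 ∈ decompLengths P μ ↔ μ = 0 := by
  simp [decompLengths, eq_comm]

lemma one_mem_decompLengths_iff : 1 ∈ decompLengths P μ ↔ μ ∈ P := by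
  simp [decompLengths, List.length_eq_one_iff]

lemma two_mem_decompLengths_iff :
    2 ∈ decompLengths P μ ↔ ∃ β ∈ P, ∃ γ ∈ P, β + γ = μ := by
  simp [decompLengths, List.length_eq_two, and_assoc]

lemma isLeast_decompLengths_one (hμ : μ ∈ P) (h0 : μ ≠ 0) :
    IsLeast (decompLengths P μ) 1 := by
  refine ⟨one_mem_decompLengths_iff.2 hμ, fun n hn => Nat.one_le_iff_ne_zero.2 ?_⟩
  rintro rfl
  exact h0 (zero_mem_decompLengths_iff.1 hn)

lemma isLeast_decompLengths_two (h2 : ∃ β ∈ P, ∃ γ ∈ P, β + γ = μ) (h0 : μ ≠ 0)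
    (h1 : μ ∉ P) : IsLeast (decompLengths P μ) 2 := by
  refine ⟨two_mem_decompLengths_iff.2 h2, fun n hn => ?_⟩
  by_contra! hn2
  interval_cases n
  · exact h0 (zero_mem_decompLengths_iff.1 hn)
  · exact h1 (one_mem_decompLengths_iff.1 hn)

end DecompLengths

lemma map_list_sum_nonneg {R : Set V} {f : V →ₗ[ℝ] ℝ} {l : List V}
    (hl : ∀ γ ∈ l, γ ∈ posRoots R f) : 0 ≤ f l.sum := by
  rw [map_list_sum]
  refine List.sum_nonneg fun x hx => ?_
  obtain ⟨γ, hγ, rfl⟩ := List.mem_map.1 hx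
  exact (hl γ hγ).2.le

namespace IsRootSystem

variable {R : Set V} (hR : IsRootSystem R)
include hR

lemma inner_self_pos {α : V} (hα : α ∈ R) : 0 < ⟪α, α⟫ :=
  real_inner_self_pos.2 (hR.ne_zero α hα)

lemma neg_mem {α : V} (hα : α ∈ R) : -α ∈ R := by
  have h := hR.reflect_mem α hα α hα
  rwa [mul_div_assoc, div_self (hR.inner_self_pos hα).ne', mul_one, two_smul,
    sub_add_cancel_left] at h

/-- The reflection `s_β α = α - (α, β∨) β` is `α - β` unless `(α, β∨) ≥ 2`. -/
lemma sub_mem_or_inner_self_le {α β : V} (hα : α ∈ R) (hβ : β ∈ R) (hpos : 0 < ⟪α, β⟫) :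
    α - β ∈ R ∨ ⟪β, β⟫ ≤ ⟪α, β⟫ := by
  have hβ0 := hR.inner_self_pos hβ
  obtain ⟨k, hk⟩ := hR.integral β hβ α hα
  have hk0 : (0 : ℝ) < k := hk ▸ by positivity
  obtain hk1 | hk2 : k = 1 ∨ 2 ≤ k := by
    have : 0 < k := by exact_mod_cast hk0
    omega
  · left
    have h := hR.reflect_mem β hβ α hα
    rwa [hk, hk1, Int.cast_one, one_smul] at h
  · right
    have : (2 : ℝ) ≤ 2 * ⟪α, β⟫ / ⟪β, β⟫ := hk ▸ by exact_mod_cast hk2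
    rw [le_div_iff₀ hβ0] at this
    linarith

lemma sub_mem {α β : V} (hα : α ∈ R) (hβ : β ∈ R) (hpos : 0 < ⟪α, β⟫) (hne : α ≠ β) :
    α - β ∈ R := by
  rcases hR.sub_mem_or_inner_self_le hα hβ hpos with h | hββ
  · exact h
  rcases hR.sub_mem_or_inner_self_le hβ hα (real_inner_comm α β ▸ hpos) with h | hαα
  · simpa using hR.neg_mem h
  rw [real_inner_comm α β] at hαα
  have : ⟪α - β, α - β⟫ ≤ 0 := by
    simp only [inner_sub_left, inner_sub_right, real_inner_comm α β]
    linarith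
  exact absurd (sub_eq_zero.1 (real_inner_self_nonpos.1 this)) hne

lemma mapsTo_of_mem_weylMonoid {w : Function.End V} (hw : w ∈ weylMonoid R) :
    Set.MapsTo w R R := by
  induction hw using Submonoid.closure_induction with
  | mem g hg =>
    obtain ⟨α, hα, rfl⟩ := hg
    exact fun β hβ => hR.reflect_mem α hα β hβ
  | one => exact Set.mapsTo_id R
  | mul g h _ _ hg hh => exact hg.comp hh

lemma eq_of_forall_inner_eq_zero {S : Set V} (hS : S ⊆ R) (hne : S.Nonempty)
    (horth : ∀ β ∈ S, ∀ γ ∈ R \ S, ⟪β, γ⟫ = 0) : S = R := by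
  by_contra h
  have hdiff : (R \ S).Nonempty := Set.sdiff_nonempty.2 fun hRS => h (hS.antisymm hRS)
  exact hR.irreducible ⟨S, R \ S, hne, hdiff, (Set.union_sdiff_cancel hS).symm, horth⟩

section MaximalRoot

variable {f : V →ₗ[ℝ] ℝ} {θ : V} (hθR : θ ∈ R) (hmax : ∀ β ∈ R, f β ≤ f θ)
include hθR hmax

lemma map_nonpos_of_inner_neg {β : V} (hβ : β ∈ R) (hneg : ⟪β, θ⟫ < 0) : f β ≤ 0 := by
  by_cases hβθ : β = -θ
  · have := hmax _ (hR.neg_mem hθR)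
    rw [map_neg] at this
    rw [hβθ, map_neg]
    linarith
  · have hsum : β - -θ ∈ R :=
      hR.sub_mem hβ (hR.neg_mem hθR) (by rw [inner_neg_right]; linarith) hβθ
    have := hmax _ hsum
    rw [map_sub, map_neg] at this
    linarith

variable (hf : ∀ α ∈ R, f α ≠ 0)
include hf

lemma map_pos_of_inner_pos {β : V} (hβ : β ∈ R) (hpos : 0 < ⟪β, θ⟫) : 0 < f β := by
  have := hR.map_nonpos_of_inner_neg hθR hmax (hR.neg_mem hβ)
    (by rwa [inner_neg_left, neg_neg_iff_pos])
  rw [map_neg] at this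
  exact (neg_nonpos.1 this).lt_of_ne' (hf β hβ)

lemma map_lt_of_inner_pos {β : V} (hβ : β ∈ R) (hpos : 0 < ⟪β, θ⟫) (hne : β ≠ θ) :
    f β < f θ := by
  have hsub : θ - β ∈ R := hR.sub_mem hθR hβ (real_inner_comm β θ ▸ hpos) hne.symm
  have h := hf _ hsub
  rw [map_sub, sub_ne_zero] at h
  exact (hmax β hβ).lt_of_ne h.symm

/-- Apart from `θ` itself, every root pairing positively with `θ` has `(β, θ∨) = 1`: otherwise
`s_θ β = β - kθ` with `k ≥ 2` and `f (kθ - β) > f θ`. -/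
lemma eq_or_two_mul_inner_eq_of_inner_pos {β : V} (hβ : β ∈ R) (hpos : 0 < ⟪β, θ⟫) :
    β = θ ∨ 2 * ⟪β, θ⟫ = ⟪θ, θ⟫ := by
  by_cases hβθ : β = θ
  · exact Or.inl hβθ
  right
  have hθ0 := hR.inner_self_pos hθR
  have hfθ := hR.map_pos_of_inner_pos hθR hmax hf hθR hθ0
  have hfβ := hR.map_lt_of_inner_pos hθR hmax hf hβ hpos hβθ
  obtain ⟨k, hk⟩ := hR.integral θ hθR β hβ
  have hrefl := hmax _ (hR.neg_mem (hR.reflect_mem θ hθR β hβ))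
  rw [hk, map_neg, map_sub, map_smul, smul_eq_mul] at hrefl
  have hk1 : k = 1 := by
    have hk0 : (0 : ℝ) < k := hk ▸ by positivity
    have hk2 : (k : ℝ) < 2 := by nlinarith
    have : 0 < k := by exact_mod_cast hk0
    have : k < 2 := by exact_mod_cast hk2
    omega
  rw [hk1, Int.cast_one, div_eq_one_iff_eq hθ0.ne'] at hk
  exact hk

lemma eq_of_inner_self_le_inner {β : V} (hβ : β ∈ R) (hle : ⟪θ, θ⟫ ≤ ⟪β, θ⟫) : β = θ := by
  have hθ0 := hR.inner_self_pos hθR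
  refine (hR.eq_or_two_mul_inner_eq_of_inner_pos hθR hmax hf hβ (by linarith)).resolve_right ?_
  intro h
  linarith

/-- Irreducibility: the roots orthogonal to `θ` and to every `δ` with `(δ, θ∨) = 1` would form an
orthogonal component of `R`, since every root not orthogonal to `θ` is `±θ` or has
`(±γ, θ∨) = 1`, and `s_γ` preserves `{δ | (δ, θ∨) = 1}` when `γ ⊥ θ`. -/
lemma exists_inner_ne_zero_of_inner_eq_zero {v : V} (hv : v ∈ R) (hvθ : ⟪v, θ⟫ = 0) :
    ∃ δ ∈ R, 2 * ⟪δ, θ⟫ = ⟪θ, θ⟫ ∧ ⟪δ, v⟫ ≠ 0 := by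
  have hθ0 := hR.inner_self_pos hθR
  by_contra! hcon
  set T : Set V := {β | β ∈ R ∧ ⟪β, θ⟫ = 0 ∧ ∀ δ ∈ R, 2 * ⟪δ, θ⟫ = ⟪θ, θ⟫ → ⟪δ, β⟫ = 0}
  suffices horth : ∀ β ∈ T, ∀ γ ∈ R \ T, ⟪β, γ⟫ = 0 by
    have hT : T = R := hR.eq_of_forall_inner_eq_zero (fun β hβ => hβ.1) ⟨v, hv, hvθ, hcon⟩ horth
    exact hθ0.ne' (hT ▸ hθR).2.1
  rintro β ⟨-, hβθ, hβT⟩ γ ⟨hγ, hγT⟩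
  have horth_pos : ∀ γ' ∈ R, 0 < ⟪γ', θ⟫ → ⟪β, γ'⟫ = 0 := fun γ' hγ' hpos => by
    rcases hR.eq_or_two_mul_inner_eq_of_inner_pos hθR hmax hf hγ' hpos with rfl | h
    · exact hβθ
    · rw [real_inner_comm]
      exact hβT γ' hγ' h
  rcases lt_trichotomy ⟪γ, θ⟫ 0 with hneg | hγθ | hpos
  · simpa using horth_pos (-γ) (hR.neg_mem hγ) (by rwa [inner_neg_left, neg_pos])
  · obtain ⟨δ, hδ, hδθ, hδγ⟩ : ∃ δ ∈ R, 2 * ⟪δ, θ⟫ = ⟪θ, θ⟫ ∧ ⟪δ, γ⟫ ≠ 0 := by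
      by_contra! h
      exact hγT ⟨hγ, hγθ, h⟩
    set c := 2 * ⟪δ, γ⟫ / ⟪γ, γ⟫
    have hc : c ≠ 0 := div_ne_zero (mul_ne_zero two_ne_zero hδγ) (hR.inner_self_pos hγ).ne'
    have hrefl := hβT _ (hR.reflect_mem γ hγ δ hδ) (by
      rw [inner_sub_left, real_inner_smul_left, hγθ, mul_zero, sub_zero, hδθ])
    rw [inner_sub_left, real_inner_smul_left, hβT δ hδ hδθ, zero_sub, neg_eq_zero] at hrefl
    rw [real_inner_comm]
    exact (mul_eq_zero.1 hrefl).resolve_left hc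
  · exact horth_pos γ hγ hpos

lemma exists_inner_pos_of_inner_eq_zero {v : V} (hv : v ∈ R) (hvθ : ⟪v, θ⟫ = 0) :
    ∃ δ ∈ R, 2 * ⟪δ, θ⟫ = ⟪θ, θ⟫ ∧ 0 < ⟪δ, v⟫ := by
  have hθ0 := hR.inner_self_pos hθR
  obtain ⟨δ, hδ, hδθ, hδv⟩ := hR.exists_inner_ne_zero_of_inner_eq_zero hθR hmax hf hv hvθ
  rcases hδv.lt_or_gt with hneg | hpos
  · have hne : θ ≠ δ := by rintro rfl; linarith
    refine ⟨θ - δ, hR.sub_mem hθR hδ (by rw [real_inner_comm]; linarith) hne, ?_, ?_⟩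
    · rw [inner_sub_left]
      linarith
    · rw [inner_sub_left, real_inner_comm, hvθ]
      linarith
  · exact ⟨δ, hδ, hδθ, hpos⟩

/-- `θ - v = θ + (-v)` if `(v, θ) < 0`, and `θ - v = (θ - δ) + (δ - v)` if `v ⊥ θ`. -/
lemma exists_add_eq_sub_of_inner_nonpos {v : V} (hv : v ∈ R) (hvθ : ⟪v, θ⟫ ≤ 0) :
    ∃ β ∈ posRoots R f, ∃ γ ∈ posRoots R f, β + γ = θ - v := by
  have hθ0 := hR.inner_self_pos hθR
  have mem_posRoots {β : V} (hβ : β ∈ R) (hpos : 0 < ⟪β, θ⟫) : β ∈ posRoots R f :=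
    ⟨hβ, hR.map_pos_of_inner_pos hθR hmax hf hβ hpos⟩
  rcases hvθ.lt_or_eq with hneg | hzero
  · refine ⟨θ, mem_posRoots hθR hθ0, -v, mem_posRoots (hR.neg_mem hv) ?_,
      (sub_eq_add_neg θ v).symm⟩
    rwa [inner_neg_left, neg_pos]
  · obtain ⟨δ, hδ, hδθ, hδv⟩ := hR.exists_inner_pos_of_inner_eq_zero hθR hmax hf hv hzero
    have hθδ : θ ≠ δ := by rintro rfl; linarith
    have hδv' : δ ≠ v := by rintro rfl; linarith
    refine ⟨θ - δ, mem_posRoots (hR.sub_mem hθR hδ (by rw [real_inner_comm]; linarith) hθδ) ?_,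
      δ - v, mem_posRoots (hR.sub_mem hδ hv hδv hδv') ?_, sub_add_sub_cancel θ δ v⟩
    · rw [inner_sub_left]
      linarith
    · rw [inner_sub_left, hzero]
      linarith

lemma sub_mem_posRoots_of_inner_pos {v : V} (hv : v ∈ R) (hpos : 0 < ⟪v, θ⟫) (hne : v ≠ θ) :
    θ - v ∈ posRoots R f := by
  refine ⟨hR.sub_mem hθR hv (real_inner_comm v θ ▸ hpos) hne.symm, ?_⟩
  rw [map_sub, sub_pos]
  exact hR.map_lt_of_inner_pos hθR hmax hf hv hpos hne

lemma sub_notMem_posRoots_of_inner_nonpos {v : V} (hv : v ∈ R) (hvθ : ⟪v, θ⟫ ≤ 0) :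
    θ - v ∉ posRoots R f := by
  intro hmem
  have h := hR.eq_of_inner_self_le_inner hθR hmax hf hmem.1 (by rw [inner_sub_left]; linarith)
  exact hR.ne_zero v hv (by simpa using h)

end MaximalRoot

end IsRootSystem

end RootSystems

theorem extremal_kostant_highest_root_general {V : Type*} [NormedAddCommGroup V]
    [InnerProductSpace ℝ V]
    (R : Set V) (hR : IsRootSystem R)
    (f : V →ₗ[ℝ] ℝ) (hf : ∀ α ∈ R, f α ≠ 0)
    (θ : V) (hθR : θ ∈ R)
    (hθ : ∀ β ∈ R, ∃ l : List V, (∀ γ ∈ l, γ ∈ simpleRoots R f) ∧ θ - β = l.sum)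
    (w : Function.End V) (hw : w ∈ weylMonoid R) :
    (w θ = θ → IsLeast (decompLengths (posRoots R f) (θ - w θ)) 0) ∧
    (0 < ⟪w θ, θ⟫ → w θ ≠ θ → IsLeast (decompLengths (posRoots R f) (θ - w θ)) 1) ∧
    (⟪w θ, θ⟫ ≤ 0 → IsLeast (decompLengths (posRoots R f) (θ - w θ)) 2) := by
  have hmax : ∀ β ∈ R, f β ≤ f θ := fun β hβ => by
    obtain ⟨l, hl, hsum⟩ := hθ β hβ
    have := map_list_sum_nonneg fun γ hγ => (hl γ hγ).1
    rwa [← hsum, map_sub, sub_nonneg] at this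
  have hv : w θ ∈ R := hR.mapsTo_of_mem_weylMonoid hw hθR
  refine ⟨fun h => ?_, fun hpos hne => ?_, fun hle => ?_⟩
  · rw [h, sub_self]
    exact ⟨zero_mem_decompLengths_iff.2 rfl, fun n _ => n.zero_le⟩
  · exact isLeast_decompLengths_one (hR.sub_mem_posRoots_of_inner_pos hθR hmax hf hv hpos hne)
      (sub_ne_zero.2 hne.symm)
  · have hne : θ - w θ ≠ 0 := fun h => by
      rw [← sub_eq_zero.1 h] at hle
      exact (hR.inner_self_pos hθR).not_ge hle
    exact isLeast_decompLengths_two (hR.exists_add_eq_sub_of_inner_nonpos hθR hmax hf hv hle) hne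
      (hR.sub_notMem_posRoots_of_inner_nonpos hθR hmax hf hv hle)

/-- Extremal Kostant degree of the highest root `θ` (untwisted): for `w` in the
Weyl group, `n(θ,w) = 0` if `w(θ) = θ`; `n(θ,w) = 1` if `(w(θ),θ) > 0` and
`w(θ) ≠ θ`; and `n(θ,w) = 2` if `(w(θ),θ) ≤ 0`.  The highest root is
characterized by the property that `θ - β` is a nonnegative integer combination
of simple roots (i.e. a sum of a list of simple roots) for every root `β`. -/
theorem extremal_kostant_highest_root {V : Type*} [NormedAddCommGroup V]
    [InnerProductSpace ℝ V] [FiniteDimensional ℝ V]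
    (R : Set V) (hR : IsRootSystem R)
    (f : V →ₗ[ℝ] ℝ) (hf : ∀ α ∈ R, f α ≠ 0)
    (θ : V) (hθR : θ ∈ R)
    (hθ : ∀ β ∈ R, ∃ l : List V, (∀ γ ∈ l, γ ∈ simpleRoots R f) ∧ θ - β = l.sum)
    (w : Function.End V) (hw : w ∈ weylMonoid R) :
    (w θ = θ → IsLeast (decompLengths (posRoots R f) (θ - w θ)) 0) ∧
    (0 < ⟪w θ, θ⟫ → w θ ≠ θ → IsLeast (decompLengths (posRoots R f) (θ - w θ)) 1) ∧
    (⟪w θ, θ⟫ ≤ 0 → IsLeast (decompLengths (posRoots R f) (θ - w θ)) 2) :=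
  extremal_kostant_highest_root_general R hR f hf θ hθR hθ w hw
end

section
/- Twisted extremal Kostant degree of the highest short root: let R be a finite reduced irreducible crystallographic root system with positive roots R₊, Weyl group W, and let ϑ be the highest short root (the unique dominant root of minimal length). Then for every w ∈ W: n^ν(ϑ, w) = 0 if w(ϑ) = ϑ; n^ν(ϑ, w) = 1 if (w(ϑ), ϑ) > 0 and w(ϑ) ≠ ϑ; and n^ν(ϑ, w) = 2 if (w(ϑ), ϑ) ≤ 0. -/
/-!
Put `β = w ϑ`, again a short root. If `(β, ϑ) > 0` and `β ≠ ϑ`, the Cartan integer `(ϑ, β∨)` is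
`1`, so `ϑ - β = s_β ϑ` is a short root, positive since it pairs positively with `ϑ`. Conversely, a
decomposition of weight `0` is empty and one of weight `1` is a single short root, while
`|ϑ - β|² = 2 m₀ - 2 (β, ϑ) > m₀` when `(β, ϑ) ≤ 0`.

When `(β, ϑ) ≤ 0` and `β` is negative, `ϑ - β = ϑ + (-β)`. Otherwise dominance forces `β ⊥ ϑ`, and
irreducibility gives a root `γ` non-orthogonal to both. Replacing `γ` by `-γ`, `γ + β` or `s_γ ϑ`,
either `ϑ - β` is itself a long root, of weight `2`, or some short `γ` has `(ϑ, γ∨) = (β, γ∨) = 1`;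
then `ϑ - β = (ϑ - γ) + (γ - β)` is a sum of two short roots pairing positively with `ϑ`.
-/

open scoped RealInnerProductSpace

namespace IsRootSystem

variable {V : Type*} [NormedAddCommGroup V] [InnerProductSpace ℝ V] {R : Set V} {a b : V}

theorem inner_self_pos_s9 (hR : IsRootSystem R) (ha : a ∈ R) : 0 < ⟪a, a⟫ :=
  real_inner_self_pos.2 (hR.ne_zero a ha)

theorem sub_smul_mem (hR : IsRootSystem R) (ha : a ∈ R) (hb : b ∈ R) {c : ℝ}
    (h : 2 * ⟪a, b⟫ = c * ⟪b, b⟫) : a - c • b ∈ R := by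
  have hc : 2 * ⟪a, b⟫ / ⟪b, b⟫ = c := by
    rw [h, mul_div_cancel_right₀ _ (hR.inner_self_pos_s9 hb).ne']
  simpa only [hc] using hR.reflect_mem b hb a ha

theorem neg_mem_s9 (hR : IsRootSystem R) (ha : a ∈ R) : -a ∈ R := by
  convert hR.sub_smul_mem ha ha (c := 2) rfl using 1
  module

theorem sub_mem_of_two_inner_eq (hR : IsRootSystem R) (ha : a ∈ R) (hb : b ∈ R)
    (h : 2 * ⟪a, b⟫ = ⟪b, b⟫) : a - b ∈ R := by
  simpa using hR.sub_smul_mem ha hb (c := 1) (by rw [h, one_mul])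

theorem sub_mem_of_add_mem (hR : IsRootSystem R) (hb : b ∈ R) (hab : ⟪a, b⟫ = 0)
    (h : a + b ∈ R) : a - b ∈ R := by
  convert hR.sub_smul_mem h hb (c := 2) (by rw [inner_add_left, hab, zero_add]) using 1
  module

theorem inner_mul_inner_lt (hR : IsRootSystem R) (ha : a ∈ R) (hb : b ∈ R) (hab : a ≠ b)
    (hab' : a ≠ -b) : ⟪a, b⟫ * ⟪a, b⟫ < ⟪a, a⟫ * ⟪b, b⟫ := by
  refine (real_inner_mul_inner_self_le a b).lt_of_ne fun h => ?_
  have hnorm : ‖⟪a, b⟫‖ = ‖a‖ * ‖b‖ := by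
    rw [Real.norm_eq_abs, ← abs_of_nonneg (by positivity : 0 ≤ ‖a‖ * ‖b‖),
      ← sq_eq_sq_iff_abs_eq_abs, mul_pow, ← real_inner_self_eq_norm_sq,
      ← real_inner_self_eq_norm_sq, sq, h]
  obtain ⟨r, -, rfl⟩ := (norm_inner_eq_norm_iff (hR.ne_zero a ha) (hR.ne_zero _ hb)).1 hnorm
  rcases hR.reduced a ha r hb with rfl | rfl
  · exact hab (one_smul ℝ a).symm
  · exact hab' (by rw [neg_one_smul, neg_neg])

/-- The Cartan integer `(a, b∨)` is `1`: strict Cauchy–Schwarz puts it strictly between `0`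
and `2`. -/
theorem two_inner_eq_of_inner_pos (hR : IsRootSystem R) (ha : a ∈ R) (hb : b ∈ R)
    (hab : a ≠ b) (hlen : ⟪a, a⟫ ≤ ⟪b, b⟫) (hpos : 0 < ⟪a, b⟫) : 2 * ⟪a, b⟫ = ⟪b, b⟫ := by
  have hb0 := hR.inner_self_pos_s9 hb
  have hab' : a ≠ -b := by
    rintro rfl
    rw [inner_neg_left] at hpos
    linarith
  have hlt : ⟪a, b⟫ < ⟪b, b⟫ := by
    nlinarith [hR.inner_mul_inner_lt ha hb hab hab', mul_le_mul_of_nonneg_right hlen hb0.le]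
  obtain ⟨k, hk⟩ := hR.integral b hb a ha
  have hk1 : k = 1 := by
    have h0 : (0 : ℝ) < k := by rw [← hk]; positivity
    have h2 : (k : ℝ) < 2 := by rw [← hk, div_lt_iff₀ hb0]; linarith
    have : 0 < k := by exact_mod_cast h0
    have : k < 2 := by exact_mod_cast h2
    omega
  rwa [hk1, Int.cast_one, div_eq_one_iff_eq hb0.ne'] at hk

theorem reflTransGen_inner_ne_zero (hR : IsRootSystem R) (ha : a ∈ R) (hb : b ∈ R) :
    Relation.ReflTransGen (fun u v => u ∈ R ∧ v ∈ R ∧ ⟪u, v⟫ ≠ 0) a b := by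
  set r : V → V → Prop := fun u v => u ∈ R ∧ v ∈ R ∧ ⟪u, v⟫ ≠ 0
  by_contra hab
  refine hR.irreducible ⟨{c ∈ R | Relation.ReflTransGen r a c},
    {c ∈ R | ¬ Relation.ReflTransGen r a c}, ⟨a, ha, .refl⟩, ⟨b, hb, hab⟩, ?_, ?_⟩
  · ext c
    simp only [Set.mem_union, Set.mem_ofPred_eq, ← and_or_left, em, and_true]
  · rintro c ⟨hc, hac⟩ d ⟨hd, had⟩
    by_contra hcd
    exact had (hac.tail ⟨hc, hd, hcd⟩)

theorem exists_inner_ne_zero_inner_ne_zero (hR : IsRootSystem R) (ha : a ∈ R) (hb : b ∈ R) :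
    ∃ γ ∈ R, ⟪a, γ⟫ ≠ 0 ∧ ⟪b, γ⟫ ≠ 0 := by
  have hab := hR.reflTransGen_inner_ne_zero ha hb
  clear hb
  induction hab with
  | refl => exact ⟨a, ha, (hR.inner_self_pos_s9 ha).ne', (hR.inner_self_pos_s9 ha).ne'⟩
  | @tail c d _ hcd ih =>
    obtain ⟨hc, hd, hcd⟩ := hcd
    obtain ⟨γ, hγ, haγ, hcγ⟩ := ih
    rcases ne_or_eq ⟪d, γ⟫ 0 with hdγ | hdγ
    · exact ⟨γ, hγ, haγ, hdγ⟩
    rcases ne_or_eq ⟪a, c⟫ 0 with hac | hac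
    · exact ⟨c, hc, hac, by rwa [real_inner_comm]⟩
    -- reflecting `γ` in `c` keeps its pairing with `a` and makes it non-orthogonal to `d`
    refine ⟨γ - (2 * ⟪γ, c⟫ / ⟪c, c⟫) • c, hR.reflect_mem c hc γ hγ, ?_, ?_⟩
    · rwa [inner_sub_right, real_inner_smul_right, hac, mul_zero, sub_zero]
    · rw [inner_sub_right, real_inner_smul_right, hdγ, zero_sub, neg_ne_zero]
      exact mul_ne_zero (div_ne_zero (mul_ne_zero two_ne_zero (by rwa [real_inner_comm]))
        (hR.inner_self_pos_s9 hc).ne') (by rwa [real_inner_comm])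

variable {m₀ : ℝ} {ϑ β γ : V}

theorem exists_short_of_inner_ne_zero (hR : IsRootSystem R) (hϑ : ϑ ∈ R) (hβ : β ∈ R)
    (hγ : γ ∈ R) (hϑϑ : ⟪ϑ, ϑ⟫ = m₀) (hββ : ⟪β, β⟫ = m₀) (hγγ : ⟪γ, γ⟫ = m₀)
    (hϑβ : ⟪ϑ, β⟫ = 0) (hϑγ : ⟪ϑ, γ⟫ ≠ 0) (hβγ : ⟪β, γ⟫ ≠ 0) :
    ∃ δ ∈ R, ⟪δ, δ⟫ = m₀ ∧ 2 * ⟪ϑ, δ⟫ = m₀ ∧ 2 * ⟪β, δ⟫ = m₀ := by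
  wlog hϑγ' : 0 < ⟪ϑ, γ⟫ generalizing γ
  · refine this (hR.neg_mem_s9 hγ) (by rwa [inner_neg_neg])
      (by rwa [inner_neg_right, neg_ne_zero]) (by rwa [inner_neg_right, neg_ne_zero]) ?_
    rw [inner_neg_right, neg_pos]
    exact (not_lt.1 hϑγ').lt_of_ne hϑγ
  wlog hβγ' : 0 < ⟪β, γ⟫ generalizing γ
  · have hβ_ne : β ≠ -γ := by
      rintro rfl
      exact hϑγ (by rw [← neg_neg γ, inner_neg_right, hϑβ, neg_zero])
    have h2 := hR.two_inner_eq_of_inner_pos hβ (hR.neg_mem_s9 hγ) hβ_ne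
      (by rw [inner_neg_neg, hγγ, hββ])
      (by rw [inner_neg_right, neg_pos]; exact (not_lt.1 hβγ').lt_of_ne hβγ)
    rw [inner_neg_right, inner_neg_neg, hγγ] at h2
    have hsum : γ + β ∈ R := by
      simpa using hR.sub_smul_mem hγ hβ (c := -1) (by rw [real_inner_comm, hββ]; linarith)
    have hϑ' : 0 < ⟪ϑ, γ + β⟫ := by rwa [inner_add_right, hϑβ, add_zero]
    have hβ' : 0 < ⟪β, γ + β⟫ := by
      rw [inner_add_right, hββ]; linarith [hR.inner_self_pos_s9 hβ]
    exact this hsum (by rw [inner_add_add_self, real_inner_comm β γ]; linarith)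
      hϑ'.ne' hβ'.ne' hϑ' hβ'
  refine ⟨γ, hγ, hγγ, ?_, ?_⟩
  · refine hγγ ▸ hR.two_inner_eq_of_inner_pos hϑ hγ ?_ (by rw [hϑϑ, hγγ]) hϑγ'
    rintro rfl
    exact hβγ (by rw [real_inner_comm, hϑβ])
  · refine hγγ ▸ hR.two_inner_eq_of_inner_pos hβ hγ ?_ (by rw [hββ, hγγ]) hβγ'
    rintro rfl
    exact hϑγ hϑβ

theorem sub_mem_of_inner_self_eq_two_mul (hR : IsRootSystem R) (hβ : β ∈ R) (hγ : γ ∈ R)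
    (hϑϑ : ⟪ϑ, ϑ⟫ = m₀) (hββ : ⟪β, β⟫ = m₀) (hγγ : ⟪γ, γ⟫ = 2 * m₀) (hϑβ : ⟪ϑ, β⟫ = 0)
    (hϑγ : 2 * ⟪ϑ, γ⟫ = ⟪γ, γ⟫) (hβγ : ⟪β, γ⟫ ≠ 0) : ϑ - β ∈ R := by
  -- `γ = ϑ ± β`, and `s_β (ϑ + β) = ϑ - β`
  wlog hβγ' : 0 < ⟪β, γ⟫ generalizing β
  · have h := this (hR.neg_mem_s9 hβ) (by rwa [inner_neg_neg])
      (by rw [inner_neg_right, hϑβ, neg_zero]) (by rwa [inner_neg_left, neg_ne_zero])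
      (by rw [inner_neg_left, neg_pos]; exact (not_lt.1 hβγ').lt_of_ne hβγ)
    rw [sub_neg_eq_add] at h
    exact hR.sub_mem_of_add_mem hβ hϑβ h
  have hm : 0 < m₀ := hββ ▸ hR.inner_self_pos_s9 hβ
  have h2 := hR.two_inner_eq_of_inner_pos hβ hγ (by rintro rfl; linarith)
    (by rw [hββ, hγγ]; linarith) hβγ'
  have hγ_eq : γ = ϑ + β := by
    rw [← sub_eq_zero, ← inner_self_eq_zero (𝕜 := ℝ)]
    simp only [inner_sub_left, inner_sub_right, inner_add_left, inner_add_right,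
      real_inner_comm ϑ γ, real_inner_comm β γ, real_inner_comm ϑ β]
    linarith
  exact hR.sub_mem_of_add_mem hβ hϑβ (hγ_eq ▸ hγ)

theorem exists_short_or_sub_mem (hR : IsRootSystem R) (hmin : ∀ γ ∈ R, m₀ ≤ ⟪γ, γ⟫)
    (hϑ : ϑ ∈ R) (hβ : β ∈ R) (hϑϑ : ⟪ϑ, ϑ⟫ = m₀) (hββ : ⟪β, β⟫ = m₀) (hϑβ : ⟪ϑ, β⟫ = 0) :
    (∃ δ ∈ R, ⟪δ, δ⟫ = m₀ ∧ 2 * ⟪ϑ, δ⟫ = m₀ ∧ 2 * ⟪β, δ⟫ = m₀) ∨ ϑ - β ∈ R := by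
  obtain ⟨γ, hγ, hϑγ, hβγ⟩ := hR.exists_inner_ne_zero_inner_ne_zero hϑ hβ
  wlog hϑγ' : 0 < ⟪ϑ, γ⟫ generalizing γ
  · exact this (-γ) (hR.neg_mem_s9 hγ) (by rwa [inner_neg_right, neg_ne_zero])
      (by rwa [inner_neg_right, neg_ne_zero])
      (by rw [inner_neg_right, neg_pos]; exact (not_lt.1 hϑγ').lt_of_ne hϑγ)
  rcases (hmin γ hγ).eq_or_lt with hshort | hlong
  · exact .inl (hR.exists_short_of_inner_ne_zero hϑ hβ hγ hϑϑ hββ hshort.symm hϑβ hϑγ hβγ)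
  have h2 := hR.two_inner_eq_of_inner_pos hϑ hγ (by rintro rfl; linarith) (by linarith) hϑγ'
  by_cases hγγ : ⟪γ, γ⟫ = 2 * m₀
  · exact .inr (hR.sub_mem_of_inner_self_eq_two_mul hβ hγ hϑϑ hββ hγγ hϑβ h2 hβγ)
  -- otherwise the short root `s_γ ϑ = ϑ - γ` is non-orthogonal to both `ϑ` and `β`
  refine .inl (hR.exists_short_of_inner_ne_zero hϑ hβ (hR.sub_mem_of_two_inner_eq hϑ hγ h2)
    hϑϑ hββ ?_ hϑβ ?_ ?_)
  · rw [inner_sub_sub_self, real_inner_comm ϑ γ]; linarith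
  · rw [inner_sub_right]
    intro h
    exact hγγ (by linarith)
  · rwa [inner_sub_right, real_inner_comm ϑ β, hϑβ, zero_sub, neg_ne_zero]

end IsRootSystem

section WeylGroup

variable {V : Type*} [NormedAddCommGroup V] [InnerProductSpace ℝ V] {R : Set V}
  {w : Function.End V}

theorem inner_rootReflection_rootReflection {α : V} (hα : ⟪α, α⟫ ≠ 0) (x y : V) :
    ⟪rootReflection α x, rootReflection α y⟫ = ⟪x, y⟫ := by
  simp only [rootReflection, inner_sub_left, inner_sub_right, real_inner_smul_left,
    real_inner_smul_right, real_inner_comm α]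
  field_simp
  ring

theorem IsRootSystem.inner_apply_apply_of_mem_weylMonoid (hR : IsRootSystem R)
    (hw : w ∈ weylMonoid R) (x y : V) : ⟪w x, w y⟫ = ⟪x, y⟫ := by
  induction hw using Submonoid.closure_induction generalizing x y with
  | mem g hg =>
    obtain ⟨α, hα, rfl⟩ := hg
    exact inner_rootReflection_rootReflection (hR.inner_self_pos_s9 hα).ne' x y
  | one => rfl
  | mul a b _ _ iha ihb => exact (iha _ _).trans (ihb x y)

theorem IsRootSystem.mapsTo_of_mem_weylMonoid_s9 (hR : IsRootSystem R) (hw : w ∈ weylMonoid R) :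
    Set.MapsTo w R R := by
  induction hw using Submonoid.closure_induction with
  | mem g hg =>
    obtain ⟨α, hα, rfl⟩ := hg
    exact fun β hβ => hR.reflect_mem α hα β hβ
  | one => exact Set.mapsTo_id R
  | mul a b _ _ ha hb => exact ha.comp hb

end WeylGroup

section TwistedDecompWeights

variable {V : Type*} [NormedAddCommGroup V] [InnerProductSpace ℝ V] {P : Set V} {m₀ : ℝ}
  {μ μ₁ μ₂ : V} {n N₁ N₂ : ℕ}

theorem zero_mem_twistedDecompWeights_zero : 0 ∈ twistedDecompWeights P m₀ 0 :=
  ⟨[], by simp, by simp, by simp⟩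

theorem mem_twistedDecompWeights_of_mem (hμ : μ ∈ P) (h : ⟪μ, μ⟫ = n * m₀) :
    n ∈ twistedDecompWeights P m₀ μ :=
  ⟨[(μ, n)], by simpa only [List.mem_singleton, forall_eq] using ⟨hμ, h⟩, by simp, by simp⟩

theorem add_mem_twistedDecompWeights (h₁ : N₁ ∈ twistedDecompWeights P m₀ μ₁)
    (h₂ : N₂ ∈ twistedDecompWeights P m₀ μ₂) :
    N₁ + N₂ ∈ twistedDecompWeights P m₀ (μ₁ + μ₂) := by
  obtain ⟨l₁, hl₁, rfl, rfl⟩ := h₁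
  obtain ⟨l₂, hl₂, rfl, rfl⟩ := h₂
  refine ⟨l₁ ++ l₂, fun p hp => ?_, by simp, by simp⟩
  rcases List.mem_append.1 hp with hp | hp
  exacts [hl₁ p hp, hl₂ p hp]

theorem eq_zero_of_zero_mem_twistedDecompWeights (hP : 0 ∉ P)
    (h : 0 ∈ twistedDecompWeights P m₀ μ) : μ = 0 := by
  obtain ⟨l, hl, rfl, hN⟩ := h
  suffices l = [] by simp [this]
  refine List.eq_nil_iff_forall_not_mem.2 fun p hp => hP ?_
  have hp0 : p.2 = 0 := List.sum_eq_zero_iff.1 hN _ (List.mem_map_of_mem hp)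
  have := (hl p hp).2
  rw [hp0, Nat.cast_zero, zero_mul, inner_self_eq_zero (𝕜 := ℝ)] at this
  exact this ▸ (hl p hp).1

theorem inner_self_eq_of_one_mem_twistedDecompWeights (hP : 0 ∉ P)
    (h : 1 ∈ twistedDecompWeights P m₀ μ) : ⟪μ, μ⟫ = m₀ := by
  obtain ⟨_ | ⟨p, l⟩, hl, rfl, hN⟩ := h
  · simp at hN
  have hp := hl p List.mem_cons_self
  have hp0 : p.2 ≠ 0 := by
    intro hp0
    rw [hp0, Nat.cast_zero, zero_mul, inner_self_eq_zero (𝕜 := ℝ)] at hp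
    exact hP (hp.2 ▸ hp.1)
  simp only [List.map_cons, List.sum_cons] at hN ⊢
  have hl0 : (l.map Prod.fst).sum = 0 :=
    eq_zero_of_zero_mem_twistedDecompWeights hP
      ⟨l, fun q hq => hl q (List.mem_cons_of_mem p hq), rfl, by omega⟩
  rw [hl0, add_zero, hp.2, show p.2 = 1 by omega, Nat.cast_one, one_mul]

end TwistedDecompWeights

section PositiveRoots

variable {V : Type*} [NormedAddCommGroup V] [InnerProductSpace ℝ V] {R : Set V}
  {f : V →ₗ[ℝ] ℝ} {m₀ : ℝ} {ϑ a b β : V}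

theorem zero_notMem_posRoots (R : Set V) (f : V →ₗ[ℝ] ℝ) : (0 : V) ∉ posRoots R f :=
  fun h => lt_irrefl (0 : ℝ) (by simpa using h.2)

theorem IsRootSystem.mem_posRoots_of_inner_pos (hR : IsRootSystem R) (hf : ∀ α ∈ R, f α ≠ 0)
    (hϑdom : ∀ α ∈ posRoots R f, 0 ≤ ⟪ϑ, α⟫) {γ : V} (hγ : γ ∈ R) (h : 0 < ⟪ϑ, γ⟫) :
    γ ∈ posRoots R f := by
  refine ⟨hγ, (hf γ hγ).lt_or_gt.resolve_left fun hneg => ?_⟩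
  have := hϑdom (-γ) ⟨hR.neg_mem_s9 hγ, by rw [map_neg]; linarith⟩
  rw [inner_neg_right] at this
  linarith

theorem IsRootSystem.one_mem_twistedDecompWeights_sub (hR : IsRootSystem R)
    (hf : ∀ α ∈ R, f α ≠ 0) (hϑdom : ∀ α ∈ posRoots R f, 0 ≤ ⟪ϑ, α⟫) (ha : a ∈ R) (hb : b ∈ R)
    (haa : ⟪a, a⟫ = m₀) (hab : 2 * ⟪a, b⟫ = ⟪b, b⟫) (hpos : 0 < ⟪ϑ, a - b⟫) :
    1 ∈ twistedDecompWeights (posRoots R f) m₀ (a - b) := by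
  refine mem_twistedDecompWeights_of_mem
    (hR.mem_posRoots_of_inner_pos hf hϑdom (hR.sub_mem_of_two_inner_eq ha hb hab) hpos) ?_
  rw [inner_sub_sub_self, real_inner_comm a b, Nat.cast_one]
  linarith

theorem IsRootSystem.two_mem_twistedDecompWeights_sub_of_inner_eq_zero (hR : IsRootSystem R)
    (hf : ∀ α ∈ R, f α ≠ 0) (hmin : ∀ γ ∈ R, m₀ ≤ ⟪γ, γ⟫) (hϑ : ϑ ∈ R) (hϑϑ : ⟪ϑ, ϑ⟫ = m₀)
    (hϑdom : ∀ α ∈ posRoots R f, 0 ≤ ⟪ϑ, α⟫) (hβ : β ∈ R) (hββ : ⟪β, β⟫ = m₀)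
    (hϑβ : ⟪ϑ, β⟫ = 0) : 2 ∈ twistedDecompWeights (posRoots R f) m₀ (ϑ - β) := by
  have hm : 0 < m₀ := hϑϑ ▸ hR.inner_self_pos_s9 hϑ
  rcases hR.exists_short_or_sub_mem hmin hϑ hβ hϑϑ hββ hϑβ with
    ⟨γ, hγ, hγγ, hϑγ, hβγ⟩ | hsub
  · rw [← sub_add_sub_cancel ϑ γ β]
    exact add_mem_twistedDecompWeights (N₁ := 1) (N₂ := 1)
      (hR.one_mem_twistedDecompWeights_sub hf hϑdom hϑ hγ hϑϑ (hϑγ.trans hγγ.symm)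
        (by rw [inner_sub_right]; linarith))
      (hR.one_mem_twistedDecompWeights_sub hf hϑdom hγ hβ hγγ
        (by rw [real_inner_comm β γ, hββ, hβγ]) (by rw [inner_sub_right, hϑβ]; linarith))
  · refine mem_twistedDecompWeights_of_mem (hR.mem_posRoots_of_inner_pos hf hϑdom hsub ?_) ?_
    · rwa [inner_sub_right, hϑβ, hϑϑ, sub_zero]
    · rw [inner_sub_sub_self, real_inner_comm ϑ β, hϑβ, hϑϑ, hββ]
      push_cast
      ring

theorem IsRootSystem.two_mem_twistedDecompWeights_sub_of_inner_nonpos (hR : IsRootSystem R)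
    (hf : ∀ α ∈ R, f α ≠ 0) (hmin : ∀ γ ∈ R, m₀ ≤ ⟪γ, γ⟫) (hϑ : ϑ ∈ R) (hϑϑ : ⟪ϑ, ϑ⟫ = m₀)
    (hϑdom : ∀ α ∈ posRoots R f, 0 ≤ ⟪ϑ, α⟫) (hβ : β ∈ R) (hββ : ⟪β, β⟫ = m₀)
    (hϑβ : ⟪ϑ, β⟫ ≤ 0) : 2 ∈ twistedDecompWeights (posRoots R f) m₀ (ϑ - β) := by
  rcases (hf β hβ).lt_or_gt with hneg | hpos
  · rw [sub_eq_add_neg]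
    refine add_mem_twistedDecompWeights (N₁ := 1) (N₂ := 1)
      (mem_twistedDecompWeights_of_mem
        (hR.mem_posRoots_of_inner_pos hf hϑdom hϑ (hR.inner_self_pos_s9 hϑ)) (by simpa using hϑϑ))
      (mem_twistedDecompWeights_of_mem ⟨hR.neg_mem_s9 hβ, by rw [map_neg]; linarith⟩
        (by simpa using hββ))
  · exact hR.two_mem_twistedDecompWeights_sub_of_inner_eq_zero hf hmin hϑ hϑϑ hϑdom hβ hββ
      (le_antisymm hϑβ (hϑdom β ⟨hβ, hpos⟩))

end PositiveRoots

theorem twisted_kostant_highest_short_root_general {V : Type*} [NormedAddCommGroup V]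
    [InnerProductSpace ℝ V]
    (R : Set V) (hR : IsRootSystem R)
    (f : V →ₗ[ℝ] ℝ) (hf : ∀ α ∈ R, f α ≠ 0)
    (m₀ : ℝ) (hm₀ : IsLeast {x : ℝ | ∃ γ ∈ R, x = ⟪γ, γ⟫} m₀)
    (ϑ : V) (hϑR : ϑ ∈ R) (hϑshort : ⟪ϑ, ϑ⟫ = m₀)
    (hϑdom : ∀ α ∈ posRoots R f, 0 ≤ ⟪ϑ, α⟫)
    (w : Function.End V) (hw : w ∈ weylMonoid R) :
    (w ϑ = ϑ → IsLeast (twistedDecompWeights (posRoots R f) m₀ (ϑ - w ϑ)) 0) ∧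
    (0 < ⟪w ϑ, ϑ⟫ → w ϑ ≠ ϑ →
      IsLeast (twistedDecompWeights (posRoots R f) m₀ (ϑ - w ϑ)) 1) ∧
    (⟪w ϑ, ϑ⟫ ≤ 0 → IsLeast (twistedDecompWeights (posRoots R f) m₀ (ϑ - w ϑ)) 2) := by
  have hmin : ∀ γ ∈ R, m₀ ≤ ⟪γ, γ⟫ := fun γ hγ => hm₀.2 ⟨γ, hγ, rfl⟩
  have hm : 0 < m₀ := hϑshort ▸ hR.inner_self_pos_s9 hϑR
  have hwϑR : w ϑ ∈ R := hR.mapsTo_of_mem_weylMonoid_s9 hw hϑR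
  have hwϑ : ⟪w ϑ, w ϑ⟫ = m₀ := (hR.inner_apply_apply_of_mem_weylMonoid hw ϑ ϑ).trans hϑshort
  have hP := zero_notMem_posRoots R f
  refine ⟨fun hfix => ?_, fun hpos hne => ⟨?_, fun n hn => ?_⟩, fun hle => ⟨?_, fun n hn => ?_⟩⟩
  · rw [hfix, sub_self]
    exact ⟨zero_mem_twistedDecompWeights_zero, fun n _ => n.zero_le⟩
  · rw [real_inner_comm] at hpos
    have h2 := hR.two_inner_eq_of_inner_pos hϑR hwϑR hne.symm (by rw [hϑshort, hwϑ]) hpos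
    exact hR.one_mem_twistedDecompWeights_sub hf hϑdom hϑR hwϑR hϑshort h2
      (by rw [inner_sub_right]; linarith)
  · exact Nat.one_le_iff_ne_zero.2 fun h0 =>
      hne (sub_eq_zero.1 (eq_zero_of_zero_mem_twistedDecompWeights hP (h0 ▸ hn))).symm
  · exact hR.two_mem_twistedDecompWeights_sub_of_inner_nonpos hf hmin hϑR hϑshort hϑdom hwϑR hwϑ
      (by rwa [real_inner_comm])
  · have h0 : n ≠ 0 := by
      rintro rfl
      rw [← sub_eq_zero.1 (eq_zero_of_zero_mem_twistedDecompWeights hP hn)] at hle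
      linarith
    have h1 : n ≠ 1 := by
      rintro rfl
      have := inner_self_eq_of_one_mem_twistedDecompWeights hP hn
      rw [inner_sub_sub_self, real_inner_comm (w ϑ) ϑ] at this
      linarith
    omega

/-- Twisted extremal Kostant degree of the highest short root `ϑ` (the unique
dominant root of minimal length): for `w` in the Weyl group, `n^ν(ϑ,w) = 0` if
`w(ϑ) = ϑ`; `n^ν(ϑ,w) = 1` if `(w(ϑ),ϑ) > 0` and `w(ϑ) ≠ ϑ`; and
`n^ν(ϑ,w) = 2` if `(w(ϑ),ϑ) ≤ 0`. -/
theorem twisted_kostant_highest_short_root {V : Type*} [NormedAddCommGroup V]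
    [InnerProductSpace ℝ V] [FiniteDimensional ℝ V]
    (R : Set V) (hR : IsRootSystem R)
    (f : V →ₗ[ℝ] ℝ) (hf : ∀ α ∈ R, f α ≠ 0)
    (m₀ : ℝ) (hm₀ : IsLeast {x : ℝ | ∃ γ ∈ R, x = ⟪γ, γ⟫} m₀)
    (ϑ : V) (hϑR : ϑ ∈ R) (hϑshort : ⟪ϑ, ϑ⟫ = m₀)
    (hϑdom : ∀ α ∈ posRoots R f, 0 ≤ ⟪ϑ, α⟫)
    (w : Function.End V) (hw : w ∈ weylMonoid R) :
    (w ϑ = ϑ → IsLeast (twistedDecompWeights (posRoots R f) m₀ (ϑ - w ϑ)) 0) ∧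
    (0 < ⟪w ϑ, ϑ⟫ → w ϑ ≠ ϑ →
      IsLeast (twistedDecompWeights (posRoots R f) m₀ (ϑ - w ϑ)) 1) ∧
    (⟪w ϑ, ϑ⟫ ≤ 0 → IsLeast (twistedDecompWeights (posRoots R f) m₀ (ϑ - w ϑ)) 2) :=
  twisted_kostant_highest_short_root_general R hR f hf m₀ hm₀ ϑ hϑR hϑshort hϑdom w hw
end

section
/- Failure of additivity for untwisted B₃: in the root system B₃ ⊂ ℝ³, let ω₁ = ε₁, ω₃ = (ε₁+ε₂+ε₃)/2, and w₀ = −id. Then n(ω₁, w₀) = 2, n(ω₃, w₀) = 2, but n(ω₁ + ω₃, w₀) = 3; that is, the minimal number of positive roots of B₃ summing to (2,0,0) is 2, to (1,1,1) is 2, and to (3,1,1) is 3. In particular, n(λ+μ, w₀) < n(λ,w₀) + n(μ,w₀) for the dominant weights λ = ω₁, μ = ω₃. -/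
/-- The positive roots of type `B₃` in `ℝ³`: the vectors `ε_i` and
`ε_i - ε_j`, `ε_i + ε_j` for `i < j`. -/
def b3PositiveRoots : Set (Fin 3 → ℝ) :=
  {v | (∃ i : Fin 3, v = Pi.single i 1) ∨
    ∃ i j : Fin 3, i < j ∧
      (v = Pi.single i 1 - Pi.single j 1 ∨ v = Pi.single i 1 + Pi.single j 1)}

/-- The set of lengths of decompositions of `v` into a sum of positive roots of
`B₃` (with repetitions). -/
def b3DecompLengths (v : Fin 3 → ℝ) : Set ℕ :=
  {N | ∃ l : List (Fin 3 → ℝ),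
    (∀ u ∈ l, u ∈ b3PositiveRoots) ∧ l.sum = v ∧ l.length = N}

/-!
Upper bounds come from explicit decompositions: `(2,0,0) = ε₁ + ε₁`,
`(1,1,1) = (ε₁ + ε₂) + ε₃` and `(3,1,1) = ε₁ + (ε₁ + ε₂) + (ε₁ + ε₃)`.
Lower bounds come from additive functionals bounded on the positive roots: the first
coordinate is at most `1` on every positive root and the coordinate sum at most `2`,
so `N` roots reach first coordinate at most `N` and coordinate sum at most `2N`.
The coordinate sums `3` of `(1,1,1)` and `5` of `(3,1,1)` then force `N ≥ 2` and `N ≥ 3`.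
-/

lemma map_list_sum_le_length_mul {M : Type*} [AddCommMonoid M] (φ : M →+ ℝ) {S : Set M}
    {c : ℝ} (hφ : ∀ u ∈ S, φ u ≤ c) {l : List M} (hl : ∀ u ∈ l, u ∈ S) :
    φ l.sum ≤ l.length * c := by
  rw [map_list_sum]
  simpa using List.sum_le_card_nsmul (l.map φ) c (by simpa using fun u hu => hφ u (hl u hu))

lemma single_mem_b3PositiveRoots (i : Fin 3) : Pi.single i 1 ∈ b3PositiveRoots :=
  Or.inl ⟨i, rfl⟩

lemma single_add_single_mem_b3PositiveRoots {i j : Fin 3} (hij : i < j) :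
    Pi.single i 1 + Pi.single j 1 ∈ b3PositiveRoots :=
  Or.inr ⟨i, j, hij, Or.inr rfl⟩

lemma apply_zero_le_one_of_mem_b3PositiveRoots {u : Fin 3 → ℝ} (hu : u ∈ b3PositiveRoots) :
    u 0 ≤ 1 := by
  rcases hu with ⟨i, rfl⟩ | ⟨i, j, hij, rfl | rfl⟩ <;>
    simp only [Pi.sub_apply, Pi.add_apply, Pi.single_apply] <;> split_ifs <;> simp_all

lemma sum_le_two_of_mem_b3PositiveRoots {u : Fin 3 → ℝ} (hu : u ∈ b3PositiveRoots) :
    ∑ i, u i ≤ 2 := by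
  rcases hu with ⟨i, rfl⟩ | ⟨i, j, -, rfl | rfl⟩ <;>
    simp [Finset.sum_sub_distrib, Finset.sum_add_distrib]
  norm_num

lemma le_mul_of_mem_b3DecompLengths (φ : (Fin 3 → ℝ) →+ ℝ) {c : ℝ}
    (hφ : ∀ u ∈ b3PositiveRoots, φ u ≤ c) {v : Fin 3 → ℝ} {N : ℕ}
    (hN : N ∈ b3DecompLengths v) : φ v ≤ N * c := by
  obtain ⟨l, hl, rfl, rfl⟩ := hN
  exact map_list_sum_le_length_mul φ hφ hl

lemma apply_zero_le_of_mem_b3DecompLengths {v : Fin 3 → ℝ} {N : ℕ}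
    (hN : N ∈ b3DecompLengths v) : v 0 ≤ N := by
  simpa using le_mul_of_mem_b3DecompLengths (Pi.evalAddMonoidHom (fun _ => ℝ) 0)
    (fun u hu => apply_zero_le_one_of_mem_b3PositiveRoots hu) hN

lemma sum_le_two_mul_of_mem_b3DecompLengths {v : Fin 3 → ℝ} {N : ℕ}
    (hN : N ∈ b3DecompLengths v) : ∑ i, v i ≤ N * 2 := by
  simpa using le_mul_of_mem_b3DecompLengths (∑ i, Pi.evalAddMonoidHom (fun _ => ℝ) i)
    (fun u hu => by simpa using sum_le_two_of_mem_b3PositiveRoots hu) hN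

lemma le_of_two_mul_sub_one_le_sum_of_mem_b3DecompLengths {v : Fin 3 → ℝ} {k N : ℕ}
    (hv : 2 * k - 1 ≤ ∑ i, v i) (hN : N ∈ b3DecompLengths v) : k ≤ N := by
  have hk : (k : ℝ) < N + 1 := by linarith [sum_le_two_mul_of_mem_b3DecompLengths hN]
  exact Nat.lt_succ_iff.mp (by exact_mod_cast hk)

/-- Failure of additivity for untwisted `B₃`: with `ω₁ = ε₁`, `ω₃ = (ε₁+ε₂+ε₃)/2`
and `w₀ = -id`, the minimal number of positive roots of `B₃` summing to
`ω₁ - w₀(ω₁) = (2,0,0)` is `2`, to `ω₃ - w₀(ω₃) = (1,1,1)` is `2`, and to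
`(ω₁+ω₃) - w₀(ω₁+ω₃) = (3,1,1)` is `3`; so `n(ω₁+ω₃,w₀) < n(ω₁,w₀) + n(ω₃,w₀)`. -/
theorem b3_additivity_failure :
    IsLeast (b3DecompLengths ![2, 0, 0]) 2 ∧
    IsLeast (b3DecompLengths ![1, 1, 1]) 2 ∧
    IsLeast (b3DecompLengths ![3, 1, 1]) 3 := by
  refine ⟨⟨?_, fun N hN => ?_⟩, ⟨?_, fun N hN => ?_⟩, ⟨?_, fun N hN => ?_⟩⟩
  · refine ⟨[Pi.single 0 1, Pi.single 0 1], ?_, ?_, rfl⟩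
    · simpa using single_mem_b3PositiveRoots 0
    · ext i; fin_cases i <;> norm_num
  · exact_mod_cast (by simpa using apply_zero_le_of_mem_b3DecompLengths hN : (2 : ℝ) ≤ N)
  · refine ⟨[Pi.single 0 1 + Pi.single 1 1, Pi.single 2 1], ?_, ?_, rfl⟩
    · simpa using ⟨single_add_single_mem_b3PositiveRoots (by decide),
        single_mem_b3PositiveRoots 2⟩
    · ext i; fin_cases i <;> simp [Fin.ext_iff]
  · exact le_of_two_mul_sub_one_le_sum_of_mem_b3DecompLengths
      (by simp [Fin.sum_univ_three]; norm_num) hN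
  · refine ⟨[Pi.single 0 1, Pi.single 0 1 + Pi.single 1 1, Pi.single 0 1 + Pi.single 2 1],
      ?_, ?_, rfl⟩
    · simpa using ⟨single_mem_b3PositiveRoots 0, single_add_single_mem_b3PositiveRoots
        (by decide), single_add_single_mem_b3PositiveRoots (by decide)⟩
    · ext i; fin_cases i <;> simp [Fin.ext_iff]; norm_num
  · exact le_of_two_mul_sub_one_le_sum_of_mem_b3DecompLengths
      (by simp [Fin.sum_univ_three]; norm_num) hN
end

section
/- Failure of additivity for D₄: in the root system D₄ ⊂ ℝ⁴, let ω₃ = (1/2,1/2,1/2,−1/2), ω₄ = (1/2,1/2,1/2,1/2), and w₀ = −id. Then n(ω₃, w₀) = 2, n(ω₄, w₀) = 2, but n(ω₃ + ω₄, w₀) = 3; that is, the minimal number of positive roots of D₄ summing to (1,1,1,−1) is 2, to (1,1,1,1) is 2, and to (2,2,2,0) is 3. In particular, n(λ+μ, w₀) < n(λ,w₀) + n(μ,w₀) for the dominant weights λ = ω₃, μ = ω₄. -/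
/-!
Lower bounds come from a linear functional: if `|s i| ≤ 1` for all `i`, then `s ⬝ᵥ α ≤ 2` for
every positive root `α = ε_i ± ε_j`, so any decomposition of `v` into `N` positive roots has
`s ⬝ᵥ v ≤ 2 N`. Taking `s = (1,1,1,-1)` for `(1,1,1,-1)` and `s = (1,1,1,1)` for `(1,1,1,1)` and
`(2,2,2,0)`, this bound is attained by the explicit decompositions
`(ε₁-ε₄) + (ε₂+ε₃)`, `(ε₁+ε₂) + (ε₃+ε₄)` and `(ε₁+ε₂) + (ε₁+ε₃) + (ε₂+ε₃)`.
-/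

/-- The positive roots of type `D₄` in `ℝ⁴`: the vectors `ε_i - ε_j` and
`ε_i + ε_j` for `i < j`. -/
def d4PositiveRoots : Set (Fin 4 → ℝ) :=
  {v | ∃ i j : Fin 4, i < j ∧
    (v = Pi.single i 1 - Pi.single j 1 ∨ v = Pi.single i 1 + Pi.single j 1)}

/-- The set of lengths of decompositions of `v` into a sum of positive roots of
`D₄` (with repetitions). -/
def d4DecompLengths (v : Fin 4 → ℝ) : Set ℕ :=
  {N | ∃ l : List (Fin 4 → ℝ),
    (∀ u ∈ l, u ∈ d4PositiveRoots) ∧ l.sum = v ∧ l.length = N}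

open Matrix

lemma dotProduct_list_sum_le {ι : Type*} [Fintype ι] (s : ι → ℝ) {c : ℝ} :
    ∀ l : List (ι → ℝ), (∀ u ∈ l, s ⬝ᵥ u ≤ c) → s ⬝ᵥ l.sum ≤ l.length * c
  | [], _ => by simp
  | a :: l, h => by
    have ha := h a List.mem_cons_self
    have hl := dotProduct_list_sum_le s l fun u hu => h u (List.mem_cons_of_mem a hu)
    simp only [List.sum_cons, dotProduct_add, List.length_cons, Nat.cast_succ]
    linarith

lemma single_sub_single_mem_d4PositiveRoots {i j : Fin 4} (hij : i < j) :
    Pi.single i 1 - Pi.single j 1 ∈ d4PositiveRoots :=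
  ⟨i, j, hij, Or.inl rfl⟩

lemma single_add_single_mem_d4PositiveRoots {i j : Fin 4} (hij : i < j) :
    Pi.single i 1 + Pi.single j 1 ∈ d4PositiveRoots :=
  ⟨i, j, hij, Or.inr rfl⟩

lemma dotProduct_le_two_of_mem_d4PositiveRoots {s u : Fin 4 → ℝ} (hs : ∀ i, |s i| ≤ 1)
    (hu : u ∈ d4PositiveRoots) : s ⬝ᵥ u ≤ 2 := by
  obtain ⟨i, j, -, rfl | rfl⟩ := hu <;>
    simp only [dotProduct_sub, dotProduct_add, dotProduct_single, mul_one] <;>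
    linarith [abs_le.mp (hs i), abs_le.mp (hs j)]

lemma dotProduct_le_two_mul_of_mem_d4DecompLengths {s v : Fin 4 → ℝ} {N : ℕ}
    (hs : ∀ i, |s i| ≤ 1) (hN : N ∈ d4DecompLengths v) : s ⬝ᵥ v ≤ 2 * N := by
  obtain ⟨l, hl, rfl, rfl⟩ := hN
  simpa [mul_comm] using dotProduct_list_sum_le s l fun u hu =>
    dotProduct_le_two_of_mem_d4PositiveRoots hs (hl u hu)

lemma isLeast_d4DecompLengths {s v : Fin 4 → ℝ} (hs : ∀ i, |s i| ≤ 1) (l : List (Fin 4 → ℝ))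
    (hl : ∀ u ∈ l, u ∈ d4PositiveRoots) (hsum : l.sum = v) (hv : s ⬝ᵥ v = 2 * l.length) :
    IsLeast (d4DecompLengths v) l.length := by
  refine ⟨⟨l, hl, hsum, rfl⟩, fun N hN => ?_⟩
  have := dotProduct_le_two_mul_of_mem_d4DecompLengths hs hN
  exact_mod_cast (by linarith : (l.length : ℝ) ≤ N)

/-- Failure of additivity for `D₄`: with `ω₃ = (1/2,1/2,1/2,-1/2)`,
`ω₄ = (1/2,1/2,1/2,1/2)` and `w₀ = -id`, the minimal number of positive roots of
`D₄` summing to `ω₃ - w₀(ω₃) = (1,1,1,-1)` is `2`, to `ω₄ - w₀(ω₄) = (1,1,1,1)`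
is `2`, and to `(ω₃+ω₄) - w₀(ω₃+ω₄) = (2,2,2,0)` is `3`; so
`n(ω₃+ω₄,w₀) < n(ω₃,w₀) + n(ω₄,w₀)`. -/
theorem d4_additivity_failure :
    IsLeast (d4DecompLengths ![1, 1, 1, -1]) 2 ∧
    IsLeast (d4DecompLengths ![1, 1, 1, 1]) 2 ∧
    IsLeast (d4DecompLengths ![2, 2, 2, 0]) 3 := by
  have hs₃ : ∀ i, |(![1, 1, 1, -1] : Fin 4 → ℝ) i| ≤ 1 := fun i => by fin_cases i <;> simp
  have hs₄ : ∀ i, |(![1, 1, 1, 1] : Fin 4 → ℝ) i| ≤ 1 := fun i => by fin_cases i <;> simp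
  refine ⟨isLeast_d4DecompLengths hs₃
      [Pi.single 0 1 - Pi.single 3 1, Pi.single 1 1 + Pi.single 2 1] ?_ ?_ ?_,
    isLeast_d4DecompLengths hs₄
      [Pi.single 0 1 + Pi.single 1 1, Pi.single 2 1 + Pi.single 3 1] ?_ ?_ ?_,
    isLeast_d4DecompLengths hs₄
      [Pi.single 0 1 + Pi.single 1 1, Pi.single 0 1 + Pi.single 2 1,
        Pi.single 1 1 + Pi.single 2 1] ?_ ?_ ?_⟩
  · simpa using ⟨single_sub_single_mem_d4PositiveRoots (by decide : (0 : Fin 4) < 3),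
      single_add_single_mem_d4PositiveRoots (by decide : (1 : Fin 4) < 2)⟩
  · ext i; fin_cases i <;> simp
  · simp [dotProduct, Fin.sum_univ_four]; norm_num
  · simpa using ⟨single_add_single_mem_d4PositiveRoots (by decide : (0 : Fin 4) < 1),
      single_add_single_mem_d4PositiveRoots (by decide : (2 : Fin 4) < 3)⟩
  · ext i; fin_cases i <;> simp
  · simp [dotProduct, Fin.sum_univ_four]; norm_num
  · simpa using ⟨single_add_single_mem_d4PositiveRoots (by decide : (0 : Fin 4) < 1),
      single_add_single_mem_d4PositiveRoots (by decide : (0 : Fin 4) < 2),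
      single_add_single_mem_d4PositiveRoots (by decide : (1 : Fin 4) < 2)⟩
  · ext i; fin_cases i <;> simp [one_add_one_eq_two]
  · simp [dotProduct, Fin.sum_univ_four]; norm_num
end

section
/- Failure of additivity for untwisted G₂: with the G₂ positive roots realized in ℤ², the minimal number of positive roots (with repetitions) summing to 14α₁ + 8α₂ is 5, while the minimal number summing to 4α₁ + 2α₂ is 2 and the minimal number summing to 6α₁ + 4α₂ is 2. Equivalently, for λ = 2ω₁ + ω₂ (where ω₁ = 2α₁+α₂, ω₂ = 3α₁+2α₂) and w₀ = −id, n(λ, w₀) = 5 < 6 = 2·n(ω₁, w₀) + n(ω₂, w₀); in particular n(·, w₀) is not additive on dominant weights of G₂. -/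
/-! The `α₁`-coordinate of a positive root is at most `3`, so a decomposition of `v` has at
least `v.1 / 3` terms; for the three vectors of the theorem an explicit decomposition
attains this bound. -/

lemma fst_le_three_of_mem_g2PositiveRoots {u : ℤ × ℤ} (hu : u ∈ g2PositiveRoots) :
    u.1 ≤ 3 := by
  simp only [g2PositiveRoots, Set.mem_insert_iff, Set.mem_singleton_iff] at hu
  rcases hu with rfl | rfl | rfl | rfl | rfl | rfl <;> decide

lemma fst_le_three_mul_of_mem_g2DecompLengths {v : ℤ × ℤ} {N : ℕ}
    (hN : N ∈ g2DecompLengths v) : v.1 ≤ 3 * N := by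
  obtain ⟨l, hl, rfl, rfl⟩ := hN
  have hfst : ∀ x ∈ l.map Prod.fst, x ≤ 3 := by
    simpa using fun u hu => fst_le_three_of_mem_g2PositiveRoots (hl u hu)
  calc l.sum.1 = (l.map Prod.fst).sum := map_list_sum (AddMonoidHom.fst ℤ ℤ) l
    _ ≤ (l.map Prod.fst).length • 3 := List.sum_le_card_nsmul _ _ hfst
    _ = 3 * l.length := by simp [mul_comm]

lemma isLeast_g2DecompLengths_length {v : ℤ × ℤ} {l : List (ℤ × ℤ)}
    (hl : ∀ u ∈ l, u ∈ g2PositiveRoots) (hsum : l.sum = v) (hv : 3 * (l.length : ℤ) < v.1 + 3) :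
    IsLeast (g2DecompLengths v) l.length :=
  ⟨⟨l, hl, hsum, rfl⟩, fun N hN => by
    have := fst_le_three_mul_of_mem_g2DecompLengths hN
    omega⟩

/-- Failure of additivity for untwisted `G₂`: the minimal number of positive
roots summing to `14α₁ + 8α₂` is `5`, while for `4α₁ + 2α₂` it is `2` and for
`6α₁ + 4α₂` it is `2`.  Equivalently, for `λ = 2ω₁ + ω₂` (with `ω₁ = 2α₁ + α₂`,
`ω₂ = 3α₁ + 2α₂`) and `w₀ = -id`: `λ - w₀(λ) = 14α₁ + 8α₂`,
`ω₁ - w₀(ω₁) = 4α₁ + 2α₂`, `ω₂ - w₀(ω₂) = 6α₁ + 4α₂`, and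
`n(λ,w₀) = 5 < 6 = 2·n(ω₁,w₀) + n(ω₂,w₀)`. -/
theorem g2_additivity_failure :
    IsLeast (g2DecompLengths (14, 8)) 5 ∧
    IsLeast (g2DecompLengths (4, 2)) 2 ∧
    IsLeast (g2DecompLengths (6, 4)) 2 :=
  ⟨isLeast_g2DecompLengths_length (l := [(3, 2), (3, 2), (3, 2), (3, 1), (2, 1)])
      (by simp [g2PositiveRoots]) (by decide) (by decide),
    isLeast_g2DecompLengths_length (l := [(2, 1), (2, 1)])
      (by simp [g2PositiveRoots]) (by decide) (by decide),
    isLeast_g2DecompLengths_length (l := [(3, 2), (3, 2)])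
      (by simp [g2PositiveRoots]) (by decide) (by decide)⟩
end

section
/- Twisted Kostant degrees of fundamental weights in type B: let n ≥ 2 and let w be a signed permutation of {1,…,n}. For 1 ≤ i ≤ n−1, with ω_i = ε₁ + ⋯ + ε_i: n^ν(ω_i, w) = 2·#{j ≤ i : w(j) > i or w(j) < 0}. For i = n, with ω_n = (ε₁ + ⋯ + ε_n)/2: n^ν(ω_n, w) = #{j ≤ n : w(j) < 0}. -/
/-- The short positive roots of type `B_n` in `ℝ^n`: the vectors `ε_i`. -/
def typeBShortRoots (n : ℕ) : Set (Fin n → ℝ) :=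
  {v | ∃ i : Fin n, v = Pi.single i 1}

/-- The long positive roots of type `B_n` in `ℝ^n`: the vectors `ε_i - ε_j` and
`ε_i + ε_j` for `i < j`. -/
def typeBLongRoots (n : ℕ) : Set (Fin n → ℝ) :=
  {v | ∃ i j : Fin n, i < j ∧
    (v = Pi.single i 1 - Pi.single j 1 ∨ v = Pi.single i 1 + Pi.single j 1)}

/-- The set of twisted weights `ν_{β₁} + ⋯ + ν_{β_M}` of decompositions of `v` into
positive roots of `B_n` (with repetitions), where `ν_β = 1` for short `β` and
`ν_β = 2` for long `β`; a decomposition is encoded as a list of pairs `(β, ν_β)`. -/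
def typeBTwistedWeights (n : ℕ) (v : Fin n → ℝ) : Set ℕ :=
  {N | ∃ l : List ((Fin n → ℝ) × ℕ),
    (∀ p ∈ l, (p.1 ∈ typeBShortRoots n ∧ p.2 = 1) ∨ (p.1 ∈ typeBLongRoots n ∧ p.2 = 2)) ∧
    (l.map Prod.fst).sum = v ∧ (l.map Prod.snd).sum = N}

/-!
Every positive root `β` has `ℓ¹`-norm `ν_β`, so `n^ν(v) ≥ ∑ⱼ |vⱼ|` for every `v`. Conversely, an
integer vector whose prefix sums are all nonnegative decomposes without cancellation: pair its first
negative entry `j` with a positive entry `i < j` (one exists because the prefix sum up to `j` is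
nonnegative) and subtract `εᵢ - εⱼ`, and once no entry is negative subtract short roots; hence
`n^ν(v) = ∑ⱼ |vⱼ|` on such vectors. For `λ = ωᵢ` and `λ = ωₙ` the vector `λ - w(λ)` is of this
kind, and its `ℓ¹`-norm is the stated count.
-/

open Finset

section

variable {n : ℕ}

theorem zero_mem_typeBTwistedWeights_zero : 0 ∈ typeBTwistedWeights n 0 :=
  ⟨[], by simp, by simp, by simp⟩

theorem add_mem_typeBTwistedWeights_add {u v : Fin n → ℝ} {a b : ℕ}
    (ha : a ∈ typeBTwistedWeights n u) (hb : b ∈ typeBTwistedWeights n v) :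
    a + b ∈ typeBTwistedWeights n (u + v) := by
  obtain ⟨l, hl, rfl, rfl⟩ := ha
  obtain ⟨m, hm, rfl, rfl⟩ := hb
  refine ⟨l ++ m, fun p hp => ?_, by simp, by simp⟩
  rcases List.mem_append.1 hp with hp | hp
  exacts [hl p hp, hm p hp]

theorem one_mem_typeBTwistedWeights_single (i : Fin n) :
    1 ∈ typeBTwistedWeights n (Pi.single i 1) :=
  ⟨[(Pi.single i 1, 1)], by simpa [typeBShortRoots] using ⟨i, rfl⟩, by simp, by simp⟩

theorem two_mem_typeBTwistedWeights_single_sub_single {i j : Fin n} (hij : i < j) :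
    2 ∈ typeBTwistedWeights n (Pi.single i 1 - Pi.single j 1) :=
  ⟨[(Pi.single i 1 - Pi.single j 1, 2)], by simpa [typeBLongRoots] using ⟨i, j, hij, by simp⟩,
    by simp, by simp⟩

theorem sum_abs_single (i : Fin n) : ∑ j, |(Pi.single i 1 : Fin n → ℝ) j| = 1 := by
  simp [Pi.single_apply, apply_ite]

theorem sum_abs_le_of_weightedRoot {p : (Fin n → ℝ) × ℕ}
    (hp : (p.1 ∈ typeBShortRoots n ∧ p.2 = 1) ∨ (p.1 ∈ typeBLongRoots n ∧ p.2 = 2)) :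
    ∑ j, |p.1 j| ≤ p.2 := by
  rcases hp with ⟨⟨i, hi⟩, hν⟩ | ⟨⟨i, j, -, hij⟩, hν⟩
  · simp [hi, hν, sum_abs_single]
  · calc ∑ k, |p.1 k|
        ≤ ∑ k, (|(Pi.single i 1 : Fin n → ℝ) k| + |(Pi.single j 1 : Fin n → ℝ) k|) := by
          refine sum_le_sum fun k _ => ?_
          rcases hij with h | h <;> rw [h]
          exacts [abs_sub _ _, abs_add_le _ _]
      _ = p.2 := by rw [sum_add_distrib, sum_abs_single, sum_abs_single, hν]; norm_num

theorem sum_abs_le_of_mem_typeBTwistedWeights {v : Fin n → ℝ} {N : ℕ}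
    (h : N ∈ typeBTwistedWeights n v) : ∑ j, |v j| ≤ N := by
  obtain ⟨l, hl, rfl, rfl⟩ := h
  induction l with
  | nil => simp
  | cons p l ih =>
    rw [List.forall_mem_cons] at hl
    simp only [List.map_cons, List.sum_cons, Pi.add_apply, Nat.cast_add]
    calc ∑ j, |p.1 j + (l.map Prod.fst).sum j|
        ≤ ∑ j, (|p.1 j| + |(l.map Prod.fst).sum j|) := sum_le_sum fun j _ => abs_add_le _ _
      _ ≤ _ := by rw [sum_add_distrib]; exact add_le_add (sum_abs_le_of_weightedRoot hl.1) (ih hl.2)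

theorem intCast_comp_single_one (i : Fin n) :
    (fun l => ((Pi.single i 1 : Fin n → ℤ) l : ℝ)) = Pi.single i 1 := by
  funext l
  simp [Pi.single_apply, apply_ite (Int.cast : ℤ → ℝ)]

theorem exists_peel_short_root {z : Fin n → ℤ} (hz : ∀ l, 0 ≤ z l) {j : Fin n} (hj : 0 < z j) :
    ∃ z' : Fin n → ℤ, (∀ k, 0 ≤ ∑ l ∈ Iic k, z' l) ∧
      ∑ l, (z l).natAbs = ∑ l, (z' l).natAbs + 1 ∧
      (fun l => (z l : ℝ)) = (fun l => (z' l : ℝ)) + Pi.single j 1 := by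
  refine ⟨z - Pi.single j 1, fun k => sum_nonneg fun l _ => ?_, ?_, ?_⟩
  · have := hz l
    simp only [Pi.sub_apply, Pi.single_apply]
    split_ifs <;> subst_vars <;> omega
  · have hpt : ∀ l, (z l).natAbs =
        ((z - Pi.single j 1 : Fin n → ℤ) l).natAbs + if l = j then 1 else 0 := by
      intro l
      have := hz l
      simp only [Pi.sub_apply, Pi.single_apply]
      split_ifs <;> subst_vars <;> omega
    simp [hpt, sum_add_distrib]
  · rw [← intCast_comp_single_one]
    funext l
    simp

theorem exists_peel_long_root {z : Fin n → ℤ} (hz : ∀ k, 0 ≤ ∑ l ∈ Iic k, z l)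
    (hneg : ∃ j, z j < 0) :
    ∃ z' : Fin n → ℤ, ∃ i j : Fin n, i < j ∧ (∀ k, 0 ≤ ∑ l ∈ Iic k, z' l) ∧
      ∑ l, (z l).natAbs = ∑ l, (z' l).natAbs + 2 ∧
      (fun l => (z l : ℝ)) = (fun l => (z' l : ℝ)) + (Pi.single i 1 - Pi.single j 1) := by
  obtain ⟨j, hj : z j < 0, hjmin⟩ := wellFounded_lt.has_min {j | z j < 0} hneg
  have hbefore : ∀ l < j, 0 ≤ z l := fun l hl => not_lt.1 fun h => hjmin l h hl
  obtain ⟨i, hij, hi⟩ : ∃ i < j, 0 < z i := by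
    by_contra! h
    have hsum := hz j
    rw [← Iio_insert, sum_insert notMem_Iio_self] at hsum
    have : ∑ l ∈ Iio j, z l ≤ 0 := sum_nonpos fun l hl => h l (mem_Iio.1 hl)
    omega
  refine ⟨z - Pi.single i 1 + Pi.single j 1, i, j, hij, fun k => ?_, ?_, ?_⟩
  · by_cases hk : j ≤ k
    · simpa [sum_add_distrib, sum_sub_distrib, sum_pi_single', hk, hij.le.trans hk] using hz k
    · refine sum_nonneg fun l hl => ?_
      have hlj : l < j := (mem_Iic.1 hl).trans_lt (not_le.1 hk)
      have := hbefore l hlj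
      simp only [Pi.add_apply, Pi.sub_apply, Pi.single_apply, hlj.ne, if_false]
      split_ifs <;> subst_vars <;> omega
  · have hpt : ∀ l, (z l).natAbs = ((z - Pi.single i 1 + Pi.single j 1 : Fin n → ℤ) l).natAbs +
        ((if l = i then 1 else 0) + if l = j then 1 else 0) := by
      intro l
      simp only [Pi.add_apply, Pi.sub_apply, Pi.single_apply]
      split_ifs <;> subst_vars <;> omega
    simp [hpt, sum_add_distrib]
  · rw [← intCast_comp_single_one, ← intCast_comp_single_one]
    funext l
    simp only [Pi.add_apply, Pi.sub_apply]
    push_cast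
    ring

theorem sum_natAbs_mem_typeBTwistedWeights (z : Fin n → ℤ) (hz : ∀ k, 0 ≤ ∑ l ∈ Iic k, z l) :
    ∑ l, (z l).natAbs ∈ typeBTwistedWeights n (fun l => (z l : ℝ)) := by
  induction hm : ∑ l, (z l).natAbs using Nat.strong_induction_on generalizing z with
  | _ m ih =>
  subst hm
  by_cases hneg : ∃ j, z j < 0
  · obtain ⟨z', i, j, hij, hz', habs, hcast⟩ := exists_peel_long_root hz hneg
    rw [habs, hcast]
    exact add_mem_typeBTwistedWeights_add (ih _ (by omega) z' hz' rfl)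
      (two_mem_typeBTwistedWeights_single_sub_single hij)
  simp only [not_exists, not_lt] at hneg
  by_cases hpos : ∃ j, 0 < z j
  · obtain ⟨j, hj⟩ := hpos
    obtain ⟨z', hz', habs, hcast⟩ := exists_peel_short_root hneg hj
    rw [habs, hcast]
    exact add_mem_typeBTwistedWeights_add (ih _ (by omega) z' hz' rfl)
      (one_mem_typeBTwistedWeights_single j)
  simp only [not_exists, not_lt] at hpos
  obtain rfl : z = 0 := funext fun l => le_antisymm (hpos l) (hneg l)
  simpa [Pi.zero_def] using zero_mem_typeBTwistedWeights_zero (n := n)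

theorem isLeast_typeBTwistedWeights_of_prefix_nonneg (z : Fin n → ℤ)
    (hz : ∀ k, 0 ≤ ∑ l ∈ Iic k, z l) :
    IsLeast (typeBTwistedWeights n (fun l => (z l : ℝ))) (∑ l, (z l).natAbs) := by
  refine ⟨sum_natAbs_mem_typeBTwistedWeights z hz, fun N hN => ?_⟩
  have h := sum_abs_le_of_mem_typeBTwistedWeights hN
  simp only [← Int.cast_abs, ← Nat.cast_natAbs] at h
  exact_mod_cast h

theorem sum_Iic_ite_symm_lt_le (σ : Equiv.Perm (Fin n)) (i : ℕ) (k : Fin n) :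
    ∑ j ∈ Iic k, (if ((σ.symm j : Fin n) : ℕ) < i then (1 : ℤ) else 0) ≤
      ∑ j ∈ Iic k, (if (j : ℕ) < i then (1 : ℤ) else 0) := by
  by_cases hk : (k : ℕ) < i
  · calc ∑ j ∈ Iic k, (if ((σ.symm j : Fin n) : ℕ) < i then (1 : ℤ) else 0)
        ≤ ∑ j ∈ Iic k, (1 : ℤ) := sum_le_sum fun j _ => by split_ifs <;> norm_num
      _ = ∑ j ∈ Iic k, (if (j : ℕ) < i then (1 : ℤ) else 0) := by
        refine sum_congr rfl fun j hj => (if_pos ?_).symm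
        exact lt_of_le_of_lt (Fin.le_def.1 (mem_Iic.1 hj)) hk
  · calc ∑ j ∈ Iic k, (if ((σ.symm j : Fin n) : ℕ) < i then (1 : ℤ) else 0)
        ≤ ∑ j, (if ((σ.symm j : Fin n) : ℕ) < i then (1 : ℤ) else 0) :=
          sum_le_univ_sum_of_nonneg fun j => by split_ifs <;> norm_num
      _ = ∑ j : Fin n, (if (j : ℕ) < i then (1 : ℤ) else 0) :=
          Equiv.sum_comp σ.symm fun j => if (j : ℕ) < i then (1 : ℤ) else 0
      _ = ∑ j ∈ Iic k, (if (j : ℕ) < i then (1 : ℤ) else 0) := by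
        refine (sum_subset (subset_univ _) fun j _ hj => if_neg ?_).symm
        have : (k : ℕ) < j := Fin.lt_def.1 (not_le.1 (mt mem_Iic.2 hj))
        omega

theorem sum_Iic_fundamental_sub_perm_nonneg (σ : Equiv.Perm (Fin n)) (s : Fin n → ℤ)
    (hs : ∀ j, s j ≤ 1) (i : ℕ) (k : Fin n) :
    0 ≤ ∑ j ∈ Iic k, ((if (j : ℕ) < i then (1 : ℤ) else 0) -
      s (σ.symm j) * (if ((σ.symm j : Fin n) : ℕ) < i then 1 else 0)) := by
  rw [sum_sub_distrib, sub_nonneg]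
  refine le_trans (sum_le_sum fun j _ => ?_) (sum_Iic_ite_symm_lt_le σ i k)
  split_ifs <;> simp [hs]

theorem isLeast_typeBTwistedWeights_spin (σ : Equiv.Perm (Fin n)) (s : Fin n → ℤ)
    (hs : ∀ j, s j = 1 ∨ s j = -1) :
    IsLeast (typeBTwistedWeights n
        (fun j : Fin n => (1 : ℝ) / 2 - (s (σ.symm j) : ℝ) * (1 / 2)))
      (#{j : Fin n | s j = -1}) := by
  set z : Fin n → ℤ := fun j => if s (σ.symm j) = -1 then 1 else 0 with hz
  have hv : (fun j : Fin n => (1 : ℝ) / 2 - (s (σ.symm j) : ℝ) * (1 / 2)) =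
      fun j => (z j : ℝ) := by
    funext j
    rcases hs (σ.symm j) with h | h <;> norm_num [hz, h]
  have hcard : ∑ j, (z j).natAbs = #{j : Fin n | s j = -1} := by
    simp only [hz, apply_ite Int.natAbs, Int.natAbs_one, Int.natAbs_zero]
    rw [Equiv.sum_comp σ.symm fun k => if s k = -1 then 1 else 0, sum_boole, Nat.cast_id]
  rw [hv, ← hcard]
  exact isLeast_typeBTwistedWeights_of_prefix_nonneg z fun k =>
    sum_nonneg fun j _ => by simp only [hz]; split_ifs <;> norm_num

theorem isLeast_typeBTwistedWeights_fundamental (σ : Equiv.Perm (Fin n)) (s : Fin n → ℤ)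
    (hs : ∀ j, s j = 1 ∨ s j = -1) (i : ℕ) :
    IsLeast (typeBTwistedWeights n
        (fun j : Fin n =>
          (if (j : ℕ) < i then (1 : ℝ) else 0) -
            (s (σ.symm j) : ℝ) * (if ((σ.symm j : Fin n) : ℕ) < i then (1 : ℝ) else 0)))
      (2 * #{j : Fin n | (j : ℕ) < i ∧ (s j = -1 ∨ (s j = 1 ∧ i ≤ ((σ j : Fin n) : ℕ)))}) := by
  set z : Fin n → ℤ := fun j => (if (j : ℕ) < i then 1 else 0) -
    s (σ.symm j) * (if ((σ.symm j : Fin n) : ℕ) < i then 1 else 0) with hz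
  have hv : (fun j : Fin n => (if (j : ℕ) < i then (1 : ℝ) else 0) -
      (s (σ.symm j) : ℝ) * (if ((σ.symm j : Fin n) : ℕ) < i then (1 : ℝ) else 0)) =
      fun j => (z j : ℝ) := by
    funext j
    push_cast [hz]
    rfl
  have hpt : ∀ k : Fin n, (z (σ k)).natAbs + (if (k : ℕ) < i then 1 else 0) =
      (if ((σ k : Fin n) : ℕ) < i then 1 else 0) +
        2 * if (k : ℕ) < i ∧ (s k = -1 ∨ (s k = 1 ∧ i ≤ ((σ k : Fin n) : ℕ))) then 1 else 0 := by
    intro k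
    rcases hs k with h | h <;> by_cases hk : (k : ℕ) < i <;>
      by_cases hσk : ((σ k : Fin n) : ℕ) < i <;> simp [hz, h, hk, hσk]
  have hcard : ∑ j, (z j).natAbs =
      2 * #{j : Fin n | (j : ℕ) < i ∧ (s j = -1 ∨ (s j = 1 ∧ i ≤ ((σ j : Fin n) : ℕ)))} := by
    have hsum := congrArg (fun f : Fin n → ℕ => ∑ k, f k) (funext hpt)
    simp only [sum_add_distrib, ← mul_sum, sum_boole, Nat.cast_id,
      Equiv.sum_comp σ (fun j => (z j).natAbs),
      Equiv.sum_comp σ (fun j => if (j : ℕ) < i then 1 else 0)] at hsum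
    omega
  rw [hv, ← hcard]
  exact isLeast_typeBTwistedWeights_of_prefix_nonneg z
    (sum_Iic_fundamental_sub_perm_nonneg σ s (fun j => (hs j).elim le_of_eq (by omega)) i)

end

/-- A signed permutation `w` is encoded by a permutation `σ` of the (0-based) index set and signs
`s i ∈ {±1}`, acting by `w(ε_i) = s(i) • ε_{σ(i)}`, so that
`(λ - w(λ))_j = λ_j - s(σ⁻¹ j) * λ_{σ⁻¹ j}`. In 1-based terms, `w(j) > i` means `s j = 1` together
with `σ(j) > i`, and `w(j) < 0` means `s j = -1`. -/
theorem twisted_kostant_fundamental_typeB_general (n : ℕ)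
    (σ : Equiv.Perm (Fin n)) (s : Fin n → ℤ) (hs : ∀ j, s j = 1 ∨ s j = -1) :
    (∀ i : ℕ, 1 ≤ i → i ≤ n - 1 →
      IsLeast (typeBTwistedWeights n
          (fun j : Fin n =>
            (if (j : ℕ) < i then (1 : ℝ) else 0) -
              (s (σ.symm j) : ℝ) * (if ((σ.symm j : Fin n) : ℕ) < i then (1 : ℝ) else 0)))
        (2 * (Finset.univ.filter (fun j : Fin n =>
          (j : ℕ) < i ∧ (s j = -1 ∨ (s j = 1 ∧ i ≤ ((σ j : Fin n) : ℕ))))).card)) ∧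
    IsLeast (typeBTwistedWeights n
        (fun j : Fin n => (1 : ℝ) / 2 - (s (σ.symm j) : ℝ) * (1 / 2)))
      ((Finset.univ.filter (fun j : Fin n => s j = -1)).card) :=
  ⟨fun i _ _ => isLeast_typeBTwistedWeights_fundamental σ s hs i,
    isLeast_typeBTwistedWeights_spin σ s hs⟩

/-- Twisted Kostant degrees of the fundamental weights in type `B_n`.  A signed
permutation `w` is encoded by a permutation `σ` of the (0-based) index set and
signs `s i ∈ {±1}`, acting by `w(ε_i) = s(i) • ε_{σ(i)}`, so that
`(λ - w(λ))_j = λ_j - s(σ⁻¹ j) * λ_{σ⁻¹ j}`.  In 1-based terms, `w(j) > i` means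
`s j = 1` together with `σ(j) > i`, and `w(j) < 0` means `s j = -1`.
For `1 ≤ i ≤ n-1`, with `ω_i = ε₁ + ⋯ + ε_i`:
`n^ν(ω_i, w) = 2·#{j ≤ i : w(j) > i or w(j) < 0}`; and for
`ω_n = (ε₁ + ⋯ + ε_n)/2`: `n^ν(ω_n, w) = #{j : w(j) < 0}`. -/
theorem twisted_kostant_fundamental_typeB (n : ℕ) (hn : 2 ≤ n)
    (σ : Equiv.Perm (Fin n)) (s : Fin n → ℤ) (hs : ∀ j, s j = 1 ∨ s j = -1) :
    (∀ i : ℕ, 1 ≤ i → i ≤ n - 1 →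
      IsLeast (typeBTwistedWeights n
          (fun j : Fin n =>
            (if (j : ℕ) < i then (1 : ℝ) else 0) -
              (s (σ.symm j) : ℝ) * (if ((σ.symm j : Fin n) : ℕ) < i then (1 : ℝ) else 0)))
        (2 * (Finset.univ.filter (fun j : Fin n =>
          (j : ℕ) < i ∧ (s j = -1 ∨ (s j = 1 ∧ i ≤ ((σ j : Fin n) : ℕ))))).card)) ∧
    IsLeast (typeBTwistedWeights n
        (fun j : Fin n => (1 : ℝ) / 2 - (s (σ.symm j) : ℝ) * (1 / 2)))
      ((Finset.univ.filter (fun j : Fin n => s j = -1)).card) :=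
  twisted_kostant_fundamental_typeB_general n σ s hs
end

section
/- Untwisted Kostant degrees of fundamental weights in type C: let n ≥ 1 and let w be a signed permutation of {1,…,n}. For every 1 ≤ i ≤ n, with ω_i = ε₁ + ⋯ + ε_i: n(ω_i, w) = #{j ≤ i : w(j) > i} + #{j ≤ i : w(j) < 0}. -/
open Finset

namespace TypeC

variable {n : ℕ}

lemma sum_abs_single {ι : Type*} [Fintype ι] [DecidableEq ι] (a : ι) (c : ℤ) :
    ∑ m, |(Pi.single a c : ι → ℤ) m| = |c| := by
  simp [Pi.single_apply, apply_ite]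

lemma sum_abs_le_two_of_mem_positiveRoots {u : Fin n → ℤ} (hu : u ∈ typeCPositiveRoots n) :
    ∑ m, |u m| ≤ 2 := by
  have hpair : ∀ a b : Fin n, ∀ c : ℤ, |c| = 1 →
      ∑ m, |(Pi.single a 1 + Pi.single b c : Fin n → ℤ) m| ≤ 2 := fun a b c hc =>
    calc ∑ m, |(Pi.single a 1 + Pi.single b c : Fin n → ℤ) m|
        ≤ ∑ m, (|(Pi.single a 1 : Fin n → ℤ) m| + |(Pi.single b c : Fin n → ℤ) m|) :=
          sum_le_sum fun m _ => abs_add_le _ _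
      _ = 2 := by rw [sum_add_distrib, sum_abs_single, sum_abs_single, hc]; norm_num
  obtain ⟨a, rfl⟩ | ⟨a, b, -, rfl | rfl⟩ := hu
  · simp [sum_abs_single]
  · simpa [sub_eq_add_neg, Pi.single_neg] using hpair a b (-1) (by norm_num)
  · simpa using hpair a b 1 (by norm_num)

lemma single_sub_smul_single_mem_positiveRoots {a b : Fin n} (hab : a < b) {t : ℤ}
    (ht : t = 1 ∨ t = -1) : Pi.single a 1 - t • Pi.single b 1 ∈ typeCPositiveRoots n := by
  refine Or.inr ⟨a, b, hab, ?_⟩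
  rcases ht with rfl | rfl
  · simp
  · simp [sub_neg_eq_add]

lemma add_mem_typeCDecompLengths {v w : Fin n → ℤ} {N M : ℕ} (hv : N ∈ typeCDecompLengths n v)
    (hw : M ∈ typeCDecompLengths n w) : N + M ∈ typeCDecompLengths n (v + w) := by
  obtain ⟨l, hl, rfl, rfl⟩ := hv
  obtain ⟨l', hl', rfl, rfl⟩ := hw
  exact ⟨l ++ l', by simpa [or_imp, forall_and] using ⟨hl, hl'⟩, by simp, by simp⟩

lemma card_mem_typeCDecompLengths_sum {ι : Type*} (S : Finset ι) (f : ι → Fin n → ℤ)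
    (hf : ∀ k ∈ S, f k ∈ typeCPositiveRoots n) :
    #S ∈ typeCDecompLengths n (∑ k ∈ S, f k) :=
  ⟨S.toList.map f, by simpa using hf, S.sum_map_toList f, by simp⟩

lemma sum_abs_le_of_mem_typeCDecompLengths {v : Fin n → ℤ} {N : ℕ}
    (h : N ∈ typeCDecompLengths n v) : ∑ m, |v m| ≤ 2 * N := by
  obtain ⟨l, hl, rfl, rfl⟩ := h
  induction l with
  | nil => simp
  | cons u l ih =>
    simp only [List.forall_mem_cons] at hl
    calc ∑ m, |(u :: l).sum m| ≤ ∑ m, (|u m| + |l.sum m|) := by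
          simpa using sum_le_sum fun m _ => abs_add_le (u m) (l.sum m)
      _ ≤ 2 + 2 * l.length := by
          rw [sum_add_distrib]; linarith [sum_abs_le_two_of_mem_positiveRoots hl.1, ih hl.2]
      _ = 2 * (u :: l).length := by push_cast [List.length_cons]; ring

lemma card_mem_typeCDecompLengths_sum_sub_sum {ι κ : Type*} {A : Finset ι} {B : Finset κ}
    (hcard : #A = #B) (f : ι → Fin n) (g : κ → Fin n) (hlt : ∀ a ∈ A, ∀ b ∈ B, g b < f a)
    (t : ι → ℤ) (ht : ∀ a ∈ A, t a = 1 ∨ t a = -1) :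
    #A ∈ typeCDecompLengths n
      (∑ b ∈ B, Pi.single (g b) 1 - ∑ a ∈ A, t a • Pi.single (f a) 1) := by
  let e : A ≃ B := Fintype.equivOfCardEq (by simpa using hcard)
  have hB : ∑ b ∈ B, (Pi.single (g b) 1 : Fin n → ℤ) = ∑ a : A, Pi.single (g (e a)) 1 := by
    rw [← sum_coe_sort B]; exact (e.sum_comp fun b : B => Pi.single (g b) 1).symm
  rw [hB, ← sum_coe_sort A, ← sum_sub_distrib, ← Fintype.card_coe A, ← card_univ]
  exact card_mem_typeCDecompLengths_sum _ _ fun a _ =>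
    single_sub_smul_single_mem_positiveRoots (hlt a a.2 _ (e a).2) (ht a a.2)

section FundamentalWeight

variable (σ : Equiv.Perm (Fin n)) (s : Fin n → ℤ) (i : ℕ)

/-- `ω_i - w ω_i`, written as in the statement. -/
def fundamentalDefect : Fin n → ℤ := fun j =>
  (if (j : ℕ) < i then (1 : ℤ) else 0) -
    s (σ.symm j) * (if ((σ.symm j : Fin n) : ℕ) < i then (1 : ℤ) else 0)

def escaping : Finset (Fin n) := {k | (k : ℕ) < i ∧ i ≤ (σ k : ℕ)}

def entering : Finset (Fin n) := {k | i ≤ (k : ℕ) ∧ (σ k : ℕ) < i}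

def negatedInside : Finset (Fin n) := {k | (k : ℕ) < i ∧ (σ k : ℕ) < i ∧ s k = -1}

lemma card_entering : #(entering σ i) = #(escaping σ i) := by
  have h : #({k | (σ k : ℕ) < i} : Finset (Fin n)) = #({k | (k : ℕ) < i} : Finset (Fin n)) :=
    card_equiv σ (by simp)
  convert card_sdiff_comm h using 2 <;> ext k <;>
    simp only [entering, escaping, mem_sdiff, mem_filter, mem_univ, true_and] <;> omega

lemma apply_lt_apply_of_mem_entering_of_mem_escaping {a b : Fin n} (ha : a ∈ escaping σ i)
    (hb : b ∈ entering σ i) : σ b < σ a := by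
  simp only [escaping, entering, mem_filter, mem_univ, true_and] at ha hb
  exact Fin.lt_def.2 (by omega)

variable {s}

lemma fundamentalDefect_eq (hs : ∀ k, s k = 1 ∨ s k = -1) :
    fundamentalDefect σ s i =
      (∑ k ∈ entering σ i, Pi.single (σ k) 1 - ∑ k ∈ escaping σ i, s k • Pi.single (σ k) 1) +
        ∑ k ∈ negatedInside σ s i, Pi.single (σ k) 2 := by
  ext q
  obtain ⟨p, rfl⟩ := σ.surjective q
  simp only [fundamentalDefect, Equiv.symm_apply_apply, entering, escaping, negatedInside,
    Pi.add_apply, Pi.sub_apply, Finset.sum_apply, Pi.smul_apply, smul_eq_mul, Pi.single_apply,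
    σ.injective.eq_iff, mul_ite, mul_one, mul_zero, sum_ite_eq, mem_filter, mem_univ, true_and]
  rcases hs p with h | h <;> grind

lemma sum_abs_fundamentalDefect (hs : ∀ k, s k = 1 ∨ s k = -1) :
    ∑ j, |fundamentalDefect σ s i j| = 2 * (#(escaping σ i) + #(negatedInside σ s i) : ℤ) := by
  have h : ∀ k, |fundamentalDefect σ s i (σ k)| = (if k ∈ entering σ i then 1 else 0) +
      (if k ∈ escaping σ i then 1 else 0) + 2 * (if k ∈ negatedInside σ s i then 1 else 0) := by
    intro k
    simp only [fundamentalDefect, Equiv.symm_apply_apply, entering, escaping, negatedInside,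
      mem_filter, mem_univ, true_and]
    rcases hs k with h | h <;> grind
  rw [← Equiv.sum_comp σ]
  simp only [h, sum_add_distrib, ← mul_sum, sum_boole, filter_mem_eq_inter, univ_inter,
    card_entering]
  ring

lemma card_escaping_add_card_negatedInside (hs : ∀ k, s k = 1 ∨ s k = -1) :
    #(escaping σ i) + #(negatedInside σ s i) =
      #{j : Fin n | (j : ℕ) < i ∧ s j = 1 ∧ i ≤ (σ j : ℕ)} +
        #{j : Fin n | (j : ℕ) < i ∧ s j = -1} := by
  simp only [escaping, negatedInside, card_filter, ← sum_add_distrib]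
  refine sum_congr rfl fun k _ => ?_
  rcases hs k with h | h <;> grind

end FundamentalWeight

end TypeC

open TypeC in
/-- The signed permutation `w` is encoded, with 0-based indices, by `σ` and the signs `s`:
`w(ε_k) = s k • ε_{σ k}`. -/
theorem kostant_fundamental_typeC_general (n : ℕ)
    (σ : Equiv.Perm (Fin n)) (s : Fin n → ℤ) (hs : ∀ j, s j = 1 ∨ s j = -1)
    (i : ℕ) :
    IsLeast (typeCDecompLengths n
        (fun j : Fin n =>
          (if (j : ℕ) < i then (1 : ℤ) else 0) -
            s (σ.symm j) * (if ((σ.symm j : Fin n) : ℕ) < i then (1 : ℤ) else 0)))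
      ((Finset.univ.filter (fun j : Fin n =>
          (j : ℕ) < i ∧ s j = 1 ∧ i ≤ ((σ j : Fin n) : ℕ))).card +
        (Finset.univ.filter (fun j : Fin n => (j : ℕ) < i ∧ s j = -1)).card) := by
  change IsLeast (typeCDecompLengths n (fundamentalDefect σ s i)) _
  rw [← card_escaping_add_card_negatedInside σ i hs]
  refine ⟨?_, fun N hN => ?_⟩
  · rw [fundamentalDefect_eq σ i hs]
    exact add_mem_typeCDecompLengths
      (card_mem_typeCDecompLengths_sum_sub_sum (card_entering σ i).symm σ σ
        (fun _ ha _ hb => apply_lt_apply_of_mem_entering_of_mem_escaping σ i ha hb)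
        s fun a _ => hs a)
      (card_mem_typeCDecompLengths_sum _ _ fun k _ => Or.inl ⟨σ k, rfl⟩)
  · have h := sum_abs_le_of_mem_typeCDecompLengths hN
    rw [sum_abs_fundamentalDefect σ i hs] at h
    omega

/-- Untwisted Kostant degrees of the fundamental weights in type `C_n`.  A signed
permutation `w` is encoded by a permutation `σ` of the (0-based) index set and
signs `s i ∈ {±1}`, acting by `w(ε_i) = s(i) • ε_{σ(i)}`, so that
`(λ - w(λ))_j = λ_j - s(σ⁻¹ j) * λ_{σ⁻¹ j}`.  In 1-based terms, `w(j) > i` means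
`s j = 1` together with `σ(j) > i`, and `w(j) < 0` means `s j = -1`.
For every `1 ≤ i ≤ n`, with `ω_i = ε₁ + ⋯ + ε_i`:
`n(ω_i, w) = #{j ≤ i : w(j) > i} + #{j ≤ i : w(j) < 0}`. -/
theorem kostant_fundamental_typeC (n : ℕ) (hn : 1 ≤ n)
    (σ : Equiv.Perm (Fin n)) (s : Fin n → ℤ) (hs : ∀ j, s j = 1 ∨ s j = -1)
    (i : ℕ) (hi1 : 1 ≤ i) (hin : i ≤ n) :
    IsLeast (typeCDecompLengths n
        (fun j : Fin n =>
          (if (j : ℕ) < i then (1 : ℤ) else 0) -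
            s (σ.symm j) * (if ((σ.symm j : Fin n) : ℕ) < i then (1 : ℤ) else 0)))
      ((Finset.univ.filter (fun j : Fin n =>
          (j : ℕ) < i ∧ s j = 1 ∧ i ≤ ((σ j : Fin n) : ℕ))).card +
        (Finset.univ.filter (fun j : Fin n => (j : ℕ) < i ∧ s j = -1)).card) :=
  kostant_fundamental_typeC_general n σ s hs i
end
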